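/- arXiv:2107.06778 — 6 statements merged into one kernel-verified Lean document; each statement's English description precedes it below -/
import Mathlib

section
/- The generating function identity for modified Bessel functions: for every x ≠ 0 and t ∈ ℝ, e^{t(x + x^{-1})/2} = Σ_{n ∈ ℤ} x^n · I_n(t), where the series converges absolutely. -/
/-- The modified Bessel function of the first kind of integer order:
`I_n(t) = Σ_{m=0}^∞ (t/2)^{2m+|n|} / (m! (m+|n|)!)`, with `I_{-n} = I_n`. -/
noncomputable def besselI (n : ℤ) (t : ℝ) : ℝ :=
  ∑' m : ℕ, (t / 2) ^ (2 * m + n.natAbs) / (m.factorial * (m + n.natAbs).factorial)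

/-! Since `e^{t(x + x⁻¹)/2} = e^{tx/2} e^{t/(2x)}`, multiply the two exponential series and group
the term of index `(j, k)` by `n = j - k`, writing `m = min j k`: that term equals
`x^n (t/2)^{2m+|n|} / (m! (m+|n|)!)`, so the `n`-th group sums to `x^n I_n(t)`. The double series
converges absolutely, which justifies the regrouping and gives absolute convergence over `ℤ`. -/

open scoped Nat

@[simps]
def diffMinEquiv : ℕ × ℕ ≃ ℤ × ℕ where
  toFun p := ((p.1 : ℤ) - p.2, min p.1 p.2)
  invFun q := (q.2 + q.1.toNat, q.2 + (-q.1).toNat)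
  left_inv := by rintro ⟨j, k⟩; simp only [Prod.mk.injEq]; omega
  right_inv := by rintro ⟨n, m⟩; simp only [Prod.mk.injEq]; omega

section LaurentProduct

variable {R : Type*} [NormedRing R] {u v : ℕ → R}

theorem summable_norm_mul_toNat (hu : Summable (‖u ·‖)) (hv : Summable (‖v ·‖)) :
    Summable fun q : ℤ × ℕ => ‖u (q.2 + q.1.toNat) * v (q.2 + (-q.1).toNat)‖ := by
  have := (hu.mul_norm hv).comp_injective diffMinEquiv.symm.injective
  simpa only [Function.comp_def, diffMinEquiv_symm_apply] using this

theorem summable_norm_tsum_mul_toNat (hu : Summable (‖u ·‖)) (hv : Summable (‖v ·‖)) :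
    Summable fun n : ℤ => ‖∑' m : ℕ, u (m + n.toNat) * v (m + (-n).toNat)‖ := by
  have h := summable_norm_mul_toNat hu hv
  exact ((summable_prod_of_nonneg fun _ => norm_nonneg _).mp h).2.of_nonneg_of_le
    (fun _ => norm_nonneg _) fun n => norm_tsum_le_tsum_norm (h.prod_factor n)

theorem tsum_mul_tsum_eq_tsum_tsum_toNat [CompleteSpace R] (hu : Summable (‖u ·‖))
    (hv : Summable (‖v ·‖)) :
    (∑' j, u j) * ∑' k, v k = ∑' n : ℤ, ∑' m : ℕ, u (m + n.toNat) * v (m + (-n).toNat) := by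
  rw [tsum_mul_tsum_of_summable_norm hu hv, ← diffMinEquiv.symm.tsum_eq]
  exact ((summable_norm_mul_toNat hu hv).of_norm).tsum_prod

end LaurentProduct

theorem pow_mul_pow_div_eq_zpow_mul_pow {K : Type*} [Field K] {x : K} (hx : x ≠ 0) (a : K)
    (p q : ℕ) : (a * x) ^ p * (a / x) ^ q = x ^ ((p : ℤ) - q) * a ^ (p + q) := by
  rw [mul_pow, div_pow, zpow_sub₀ hx, zpow_natCast, zpow_natCast, pow_add]
  field_simp

theorem factorial_toNat_mul_factorial_toNat_neg (n : ℤ) (m : ℕ) :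
    (m + n.toNat)! * (m + (-n).toNat)! = m ! * (m + n.natAbs)! := by
  rcases le_total 0 n with h | h
  · rw [show (-n).toNat = 0 by omega, show n.toNat = n.natAbs by omega, add_zero, mul_comm]
  · rw [show n.toNat = 0 by omega, show (-n).toNat = n.natAbs by omega, add_zero]

theorem pow_div_factorial_mul_pow_div_factorial_eq_zpow_mul {K : Type*} [Field K] {x : K}
    (hx : x ≠ 0) (a : K) (n : ℤ) (m : ℕ) :
    (a * x) ^ (m + n.toNat) / (m + n.toNat)! * ((a / x) ^ (m + (-n).toNat) / (m + (-n).toNat)!)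
      = x ^ n * (a ^ (2 * m + n.natAbs) / (m ! * (m + n.natAbs)!)) := by
  have hdiff : ((m + n.toNat : ℕ) : ℤ) - (m + (-n).toNat : ℕ) = n := by push_cast; omega
  have hsum : m + n.toNat + (m + (-n).toNat) = 2 * m + n.natAbs := by omega
  rw [div_mul_div_comm, pow_mul_pow_div_eq_zpow_mul_pow hx, hdiff, hsum, ← Nat.cast_mul,
    factorial_toNat_mul_factorial_toNat_neg, mul_div_assoc, Nat.cast_mul]

theorem tsum_pow_div_factorial_mul_eq_zpow_mul_besselI {x : ℝ} (hx : x ≠ 0) (t : ℝ) (n : ℤ) :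
    ∑' m : ℕ, (t / 2 * x) ^ (m + n.toNat) / (m + n.toNat)! *
      ((t / 2 / x) ^ (m + (-n).toNat) / (m + (-n).toNat)!) = x ^ n * besselI n t := by
  simp only [pow_div_factorial_mul_pow_div_factorial_eq_zpow_mul hx, besselI, tsum_mul_left]

theorem besselI_generating_function (x t : ℝ) (hx : x ≠ 0) :
    Summable (fun n : ℤ => |x ^ n * besselI n t|) ∧
    Real.exp (t * (x + x⁻¹) / 2) = ∑' n : ℤ, x ^ n * besselI n t := by
  have hu := NormedSpace.norm_expSeries_div_summable (t / 2 * x)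
  have hv := NormedSpace.norm_expSeries_div_summable (t / 2 / x)
  simp only [← tsum_pow_div_factorial_mul_eq_zpow_mul_besselI hx]
  constructor
  · simpa only [Real.norm_eq_abs] using summable_norm_tsum_mul_toNat hu hv
  · rw [← tsum_mul_tsum_eq_tsum_tsum_toNat hu hv,
      (NormedSpace.expSeries_div_hasSum_exp _).tsum_eq,
      (NormedSpace.expSeries_div_hasSum_exp _).tsum_eq, ← Real.exp_eq_exp_ℝ, ← Real.exp_add]
    congr 1
    ring
end

section
/- For every k ∈ ℕ₀ and t > 0, there exists a polynomial p_k of degree k with positive coefficients, with p_0 = 1 and p_k(0) = 0 for k ≥ 1, such that Σ_{n ∈ ℤ} n^{2k}·I_n(t) = e^t·p_k(t); moreover Σ_{n ∈ ℤ} n^{2k+1}·I_n(t) = 0. -/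
/-!
With `x = t / 2`, the series for `I_n(t)` collects the terms of the Cauchy product
`e^x · e^x = Σ_{a,b} x^a/a! · x^b/b!` with `b - a = n`, so `Σ_n n^m I_n(t)` is the "pair moment"
`M_m = Σ_{a,b} (b - a)^m x^a/a! · x^b/b!`, and `M_0 = e^{2x}`. The swap `a ↔ b` kills the odd
moments. Splitting `(b - a)^{m+1} = (b - a)^m b - (b - a)^m a`, the swap together with the shift
`b x^b/b! = x · x^{b-1}/(b-1)!` gives `M_{2k+2} = 2x Σ_i C(2k+1, 2i) M_{2i}`. Hence
`M_{2k} = e^{2x} p_k(2x)` with `p_0 = 1`, `p_{k+1} = X · Σ_i C(2k+1, 2i) p_i`, and this recursion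
visibly produces degree `k`, no constant term and positive coefficients.
-/

open Finset Nat Polynomial

namespace BesselMoments

noncomputable def expProdTerm (x : ℝ) (p : ℕ × ℕ) : ℝ := x ^ p.1 / p.1 ! * (x ^ p.2 / p.2 !)

noncomputable def pairMoment (x : ℝ) (m : ℕ) : ℝ :=
  ∑' p : ℕ × ℕ, ((p.2 : ℝ) - p.1) ^ m * expProdTerm x p

theorem summable_mul_expProdTerm {F : ℕ × ℕ → ℝ} {d : ℕ}
    (hF : ∀ p, |F p| ≤ ((p.1 + p.2 + 1 : ℕ) : ℝ) ^ d) (x : ℝ) :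
    Summable fun p => F p * expProdTerm x p := by
  have hy := Real.summable_pow_div_factorial |2 ^ d * x|
  refine (hy.mul_of_nonneg hy (fun n => by positivity) (fun n => by positivity)).of_norm_bounded
    fun p => ?_
  have hgrowth : ((p.1 + p.2 + 1 : ℕ) : ℝ) ^ d ≤ (2 ^ d) ^ (p.1 + p.2) := by
    rw [← pow_mul, mul_comm, pow_mul]
    gcongr
    exact_mod_cast Nat.lt_two_pow_self
  calc ‖F p * expProdTerm x p‖ = |F p| * (|x| ^ p.1 / p.1 ! * (|x| ^ p.2 / p.2 !)) := by
        simp [expProdTerm]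
    _ ≤ (2 ^ d) ^ (p.1 + p.2) * (|x| ^ p.1 / p.1 ! * (|x| ^ p.2 / p.2 !)) := by
        gcongr; exact (hF p).trans hgrowth
    _ = |2 ^ d * x| ^ p.1 / p.1 ! * (|2 ^ d * x| ^ p.2 / p.2 !) := by
        rw [abs_mul, abs_of_pos (by positivity : (0 : ℝ) < 2 ^ d), mul_pow, mul_pow, pow_add]
        ring

theorem abs_sub_le_add_add_one (a b : ℕ) : |(b : ℝ) - a| ≤ ((a + b + 1 : ℕ) : ℝ) := by
  have ha : (0 : ℝ) ≤ a := a.cast_nonneg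
  have hb : (0 : ℝ) ≤ b := b.cast_nonneg
  rw [abs_le]; push_cast; constructor <;> linarith

theorem summable_sub_pow_mul_expProdTerm (x : ℝ) (m : ℕ) :
    Summable fun p : ℕ × ℕ => ((p.2 : ℝ) - p.1) ^ m * expProdTerm x p :=
  summable_mul_expProdTerm (d := m) (fun p => by
    rw [abs_pow]; exact pow_le_pow_left₀ (abs_nonneg _) (abs_sub_le_add_add_one _ _) m) x

theorem summable_sub_pow_mul_snd_mul_expProdTerm (x : ℝ) (m : ℕ) :
    Summable fun p : ℕ × ℕ => ((p.2 : ℝ) - p.1) ^ m * p.2 * expProdTerm x p :=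
  summable_mul_expProdTerm (d := m + 1) (fun p => by
    rw [abs_mul, abs_pow, Nat.abs_cast, pow_succ]
    gcongr
    · exact abs_sub_le_add_add_one _ _
    · omega) x

theorem pairMoment_zero (x : ℝ) : pairMoment x 0 = Real.exp (2 * x) := by
  have hexp := NormedSpace.expSeries_div_hasSum_exp (𝔸 := ℝ) x
  have hnorm : Summable fun n : ℕ => ‖x ^ n / (n !)‖ := by
    simpa [abs_div, abs_pow] using Real.summable_pow_div_factorial |x|
  simp only [pairMoment, pow_zero, one_mul, expProdTerm]
  rw [← tsum_mul_tsum_of_summable_norm hnorm hnorm, hexp.tsum_eq, ← Real.exp_eq_exp_ℝ,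
    ← Real.exp_add, two_mul]

theorem pairMoment_odd (x : ℝ) (k : ℕ) : pairMoment x (2 * k + 1) = 0 := by
  have hanti : pairMoment x (2 * k + 1) = -pairMoment x (2 * k + 1) := by
    rw [pairMoment, ← tsum_neg, ← (Equiv.prodComm ℕ ℕ).tsum_eq]
    refine tsum_congr fun p => ?_
    simp only [Equiv.prodComm_apply, Prod.fst_swap, Prod.snd_swap, expProdTerm]
    rw [← neg_sub (p.2 : ℝ), Odd.neg_pow ⟨k, rfl⟩]
    ring
  linarith

theorem tsum_mul_snd_mul_expProdTerm (F : ℕ × ℕ → ℝ) (x : ℝ) :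
    ∑' p, F p * p.2 * expProdTerm x p = x * ∑' p, F (p.1, p.2 + 1) * expProdTerm x p := by
  have hinj : Function.Injective fun p : ℕ × ℕ => (p.1, p.2 + 1) := by
    intro p q h; simp_all [Prod.ext_iff]
  rw [← hinj.tsum_eq, ← tsum_mul_left]
  · refine tsum_congr fun p => ?_
    simp only [expProdTerm, Nat.factorial_succ, pow_succ]
    push_cast
    field_simp
  · rintro ⟨a, b⟩ hp
    cases b with
    | zero => simp at hp
    | succ b => exact ⟨(a, b), rfl⟩

theorem pairMoment_succ (x : ℝ) (m : ℕ) :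
    pairMoment x (m + 1) =
      (1 - (-1) ^ m) * ∑' p : ℕ × ℕ, ((p.2 : ℝ) - p.1) ^ m * p.2 * expProdTerm x p := by
  set H := fun p : ℕ × ℕ => ((p.2 : ℝ) - p.1) ^ m * p.2 * expProdTerm x p
  have hH : Summable H := summable_sub_pow_mul_snd_mul_expProdTerm x m
  have hHswap : Summable fun p : ℕ × ℕ => H p.swap := (Equiv.prodComm ℕ ℕ).summable_iff.2 hH
  have hswap : ∑' p : ℕ × ℕ, H p.swap = ∑' p : ℕ × ℕ, H p := (Equiv.prodComm ℕ ℕ).tsum_eq H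
  have hsplit (p : ℕ × ℕ) :
      ((p.2 : ℝ) - p.1) ^ (m + 1) * expProdTerm x p = H p - (-1) ^ m * H p.swap := by
    simp only [H, Prod.fst_swap, Prod.snd_swap, expProdTerm]
    have hsign : ((-1 : ℝ) ^ m) * (-1) ^ m = 1 := by rw [← mul_pow]; norm_num
    rw [← neg_sub (p.2 : ℝ), neg_pow ((p.2 : ℝ) - p.1)]
    linear_combination
      ((p.2 : ℝ) - p.1) ^ m * p.1 * (x ^ p.1 / p.1 ! * (x ^ p.2 / p.2 !)) * hsign
  rw [pairMoment, tsum_congr hsplit, hH.tsum_sub (hHswap.mul_left _), tsum_mul_left, hswap]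
  ring

theorem tsum_sub_pow_mul_snd_mul_expProdTerm (x : ℝ) (m : ℕ) :
    ∑' p : ℕ × ℕ, ((p.2 : ℝ) - p.1) ^ m * p.2 * expProdTerm x p
      = x * ∑ j ∈ range (m + 1), (m.choose j : ℝ) * pairMoment x j := by
  rw [tsum_mul_snd_mul_expProdTerm]
  congr 1
  calc ∑' p : ℕ × ℕ, (((p.2 + 1 : ℕ) : ℝ) - p.1) ^ m * expProdTerm x p
      = ∑' p : ℕ × ℕ, ∑ j ∈ range (m + 1),
          (m.choose j : ℝ) * (((p.2 : ℝ) - p.1) ^ j * expProdTerm x p) := by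
        refine tsum_congr fun p => ?_
        rw [Nat.cast_succ, add_sub_right_comm, add_pow, sum_mul]
        refine sum_congr rfl fun j _ => ?_
        ring
    _ = _ := by
        rw [Summable.tsum_finsetSum fun j _ => (summable_sub_pow_mul_expProdTerm x j).mul_left _]
        simp only [tsum_mul_left, pairMoment]

theorem sum_range_two_mul {M : Type*} [AddCommMonoid M] (f : ℕ → M) (n : ℕ) :
    ∑ j ∈ range (2 * n), f j = ∑ i ∈ range n, (f (2 * i) + f (2 * i + 1)) := by
  induction n with
  | zero => simp
  | succ n ih =>
    rw [mul_add, mul_one, sum_range_succ, sum_range_succ, ih, sum_range_succ, add_assoc]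

theorem pairMoment_even_succ (x : ℝ) (k : ℕ) :
    pairMoment x (2 * (k + 1)) =
      2 * x * ∑ i ∈ range (k + 1), ((2 * k + 1).choose (2 * i) : ℝ) * pairMoment x (2 * i) := by
  rw [show 2 * (k + 1) = 2 * k + 1 + 1 by ring, pairMoment_succ, Odd.neg_one_pow ⟨k, rfl⟩,
    tsum_sub_pow_mul_snd_mul_expProdTerm, show 2 * k + 1 + 1 = 2 * (k + 1) by ring,
    sum_range_two_mul]
  simp only [pairMoment_odd, mul_zero, add_zero]
  ring

noncomputable def besselMomentPoly : ℕ → ℝ[X]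
  | 0 => 1
  | k + 1 => X * ∑ i : Fin (k + 1), ((2 * k + 1).choose (2 * i) : ℝ) • besselMomentPoly i

theorem besselMomentPoly_succ (k : ℕ) :
    besselMomentPoly (k + 1) =
      X * ∑ i ∈ range (k + 1), ((2 * k + 1).choose (2 * i) : ℝ) • besselMomentPoly i := by
  rw [besselMomentPoly, Fin.sum_univ_eq_sum_range
    (fun i => ((2 * k + 1).choose (2 * i) : ℝ) • besselMomentPoly i)]

theorem coeff_succ_besselMomentPoly_succ (k j : ℕ) :
    (besselMomentPoly (k + 1)).coeff (j + 1) =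
      ∑ i ∈ range (k + 1), ((2 * k + 1).choose (2 * i) : ℝ) * (besselMomentPoly i).coeff j := by
  simp [besselMomentPoly_succ, coeff_X_mul]

theorem coeff_besselMomentPoly_nonneg (k i : ℕ) : 0 ≤ (besselMomentPoly k).coeff i := by
  induction k using Nat.strong_induction_on generalizing i with
  | _ k ih =>
    match k, i with
    | 0, i => rw [besselMomentPoly, coeff_one]; split_ifs <;> norm_num
    | k + 1, 0 => simp [besselMomentPoly_succ]
    | k + 1, j + 1 =>
      rw [coeff_succ_besselMomentPoly_succ]
      exact sum_nonneg fun l hl => mul_nonneg (Nat.cast_nonneg _) (ih l (by simpa using hl) j)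

theorem choose_mul_coeff_le_coeff_besselMomentPoly_succ {k l : ℕ} (hl : l ≤ k) (j : ℕ) :
    ((2 * k + 1).choose (2 * l) : ℝ) * (besselMomentPoly l).coeff j ≤
      (besselMomentPoly (k + 1)).coeff (j + 1) := by
  rw [coeff_succ_besselMomentPoly_succ]
  exact single_le_sum
    (f := fun i => ((2 * k + 1).choose (2 * i) : ℝ) * (besselMomentPoly i).coeff j)
    (fun i _ => mul_nonneg (Nat.cast_nonneg _) (coeff_besselMomentPoly_nonneg i j))
    (mem_range.2 (Nat.lt_succ_of_le hl))

theorem coeff_self_besselMomentPoly_pos (k : ℕ) : 0 < (besselMomentPoly k).coeff k := by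
  induction k with
  | zero => simp [besselMomentPoly]
  | succ k ih =>
    have hchoose : 0 < (2 * k + 1).choose (2 * k) := Nat.choose_pos (by omega)
    exact (mul_pos (by exact_mod_cast hchoose) ih).trans_le
      (choose_mul_coeff_le_coeff_besselMomentPoly_succ le_rfl k)

theorem coeff_besselMomentPoly_pos {k i : ℕ} (hi : 1 ≤ i) (hik : i ≤ k) :
    0 < (besselMomentPoly k).coeff i := by
  obtain ⟨k, rfl⟩ : ∃ k', k = k' + 1 := ⟨k - 1, by omega⟩
  obtain ⟨j, rfl⟩ : ∃ j, i = j + 1 := ⟨i - 1, by omega⟩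
  have hj : j ≤ k := by omega
  have hchoose : 0 < (2 * k + 1).choose (2 * j) := Nat.choose_pos (by omega)
  exact (mul_pos (by exact_mod_cast hchoose) (coeff_self_besselMomentPoly_pos j)).trans_le
    (choose_mul_coeff_le_coeff_besselMomentPoly_succ hj j)

theorem natDegree_besselMomentPoly_le (k : ℕ) : (besselMomentPoly k).natDegree ≤ k := by
  induction k using Nat.strong_induction_on with
  | _ k ih =>
    match k with
    | 0 => simp [besselMomentPoly]
    | k + 1 =>
      rw [besselMomentPoly_succ]
      refine natDegree_mul_le.trans ?_
      rw [natDegree_X, add_comm]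
      gcongr
      refine natDegree_sum_le_of_forall_le _ _ fun i hi => (natDegree_smul_le _ _).trans ?_
      have hi : i < k + 1 := mem_range.1 hi
      exact (ih i hi).trans (by omega)

theorem natDegree_besselMomentPoly (k : ℕ) : (besselMomentPoly k).natDegree = k :=
  natDegree_eq_of_le_of_coeff_ne_zero (natDegree_besselMomentPoly_le k)
    (coeff_self_besselMomentPoly_pos k).ne'

theorem besselMomentPoly_eval_zero {k : ℕ} (hk : 1 ≤ k) : (besselMomentPoly k).eval 0 = 0 := by
  obtain ⟨k, rfl⟩ : ∃ k', k = k' + 1 := ⟨k - 1, by omega⟩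
  simp [besselMomentPoly_succ]

theorem pairMoment_even (x : ℝ) (k : ℕ) :
    pairMoment x (2 * k) = Real.exp (2 * x) * (besselMomentPoly k).eval (2 * x) := by
  induction k using Nat.strong_induction_on with
  | _ k ih =>
    match k with
    | 0 => simp [pairMoment_zero, besselMomentPoly]
    | k + 1 =>
      rw [pairMoment_even_succ, besselMomentPoly_succ, eval_mul, eval_X, eval_finsetSum,
        mul_sum, mul_sum, mul_sum]
      refine sum_congr rfl fun i hi => ?_
      rw [ih i (by simpa using hi), eval_smul, smul_eq_mul]
      ring

def natPairEquiv : ℤ × ℕ ≃ ℕ × ℕ where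
  toFun q := (q.2 + (-q.1).toNat, q.2 + q.1.toNat)
  invFun p := ((p.2 : ℤ) - p.1, min p.1 p.2)
  left_inv := by
    rintro ⟨n, m⟩
    ext <;> simp only <;> omega
  right_inv := by
    rintro ⟨a, b⟩
    ext <;> simp only <;> omega

theorem natPairEquiv_sub (n : ℤ) (m : ℕ) :
    ((natPairEquiv (n, m)).2 : ℝ) - (natPairEquiv (n, m)).1 = n := by
  have : ((natPairEquiv (n, m)).2 : ℤ) - (natPairEquiv (n, m)).1 = n := by
    simp only [natPairEquiv, Equiv.coe_fn_mk]; omega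
  exact_mod_cast this

theorem expProdTerm_natPairEquiv (x : ℝ) (n : ℤ) (m : ℕ) :
    expProdTerm x (natPairEquiv (n, m)) =
      x ^ (2 * m + n.natAbs) / (m ! * (m + n.natAbs) !) := by
  obtain ⟨n, rfl | rfl⟩ := Int.eq_nat_or_neg n <;>
  · simp [natPairEquiv, expProdTerm, two_mul, pow_add]
    ring

theorem tsum_pow_mul_besselI (m : ℕ) (t : ℝ) :
    ∑' n : ℤ, (n : ℝ) ^ m * besselI n t = pairMoment (t / 2) m := by
  set F := fun p : ℕ × ℕ => ((p.2 : ℝ) - p.1) ^ m * expProdTerm (t / 2) p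
  have hF : Summable (F ∘ natPairEquiv) :=
    natPairEquiv.summable_iff.2 (summable_sub_pow_mul_expProdTerm _ m)
  calc ∑' n : ℤ, (n : ℝ) ^ m * besselI n t = ∑' n : ℤ, ∑' j : ℕ, F (natPairEquiv (n, j)) := by
        simp only [F, besselI, natPairEquiv_sub, expProdTerm_natPairEquiv, tsum_mul_left]
    _ = ∑' q : ℤ × ℕ, F (natPairEquiv q) := (hF.tsum_prod' hF.prod_factor).symm
    _ = pairMoment (t / 2) m := natPairEquiv.tsum_eq F

end BesselMoments

open BesselMoments in
theorem besselI_even_moments (k : ℕ) :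
    ∃ p : Polynomial ℝ,
      p.natDegree = k ∧
      (k = 0 → p = 1) ∧
      (1 ≤ k → p.eval 0 = 0) ∧
      (∀ i : ℕ, 1 ≤ i → i ≤ k → 0 < p.coeff i) ∧
      ∀ t : ℝ, 0 < t →
        (∑' n : ℤ, (n : ℝ) ^ (2 * k) * besselI n t = Real.exp t * p.eval t) ∧
        (∑' n : ℤ, (n : ℝ) ^ (2 * k + 1) * besselI n t = 0) := by
  refine ⟨besselMomentPoly k, natDegree_besselMomentPoly k,
    fun hk => by rw [hk, besselMomentPoly], besselMomentPoly_eval_zero,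
    fun i => coeff_besselMomentPoly_pos, fun t _ => ⟨?_, ?_⟩⟩
  · rw [tsum_pow_mul_besselI, pairMoment_even, mul_div_cancel₀ t two_ne_zero]
  · rw [tsum_pow_mul_besselI, pairMoment_odd]
end

section
/- Define coefficients c_{k,j} by c_{0,j} = 1 for all j ≥ 0, c_{j,j} = c_{j-1,j} for j ≥ 1, and the recurrence c_{k,j} = c_{k,j-1} + c_{k-1,j}·(j-k+1) for 1 ≤ k ≤ j-1. Then for all j ≥ 1 and 1 ≤ k ≤ j-1, c_{k,j} = (1/(2^k·k!))·(j-k+1)(j-k+2)···(j+k), i.e. c_{k,j} = Γ(j+k+1)/(2^k·k!·Γ(j-k+1)). -/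
private noncomputable def fcoef (j k : ℕ) : ℝ :=
  ((j + k).factorial : ℝ) / (2 ^ k * (k.factorial : ℝ) * ((j - k).factorial : ℝ))

private lemma fcoef_zero (j : ℕ) : fcoef j 0 = 1 := by
  have : (j.factorial : ℝ) ≠ 0 := Nat.cast_ne_zero.mpr j.factorial_ne_zero
  simp [fcoef, div_self this]

private lemma fcoef_diag (j : ℕ) (hj : 1 ≤ j) : fcoef j j = fcoef j (j - 1) := by
  obtain ⟨b, rfl⟩ : ∃ b, j = b + 1 := ⟨j - 1, by omega⟩
  simp only [fcoef, Nat.add_sub_cancel, Nat.sub_self]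
  have h1 : b + 1 + (b + 1) = (b + 1 + b) + 1 := by ring
  have h2 : b + 1 - b = 1 := by omega
  rw [h1, h2, Nat.factorial_succ]
  have hb : (b.factorial : ℝ) ≠ 0 := Nat.cast_ne_zero.mpr b.factorial_ne_zero
  have hbb : ((b + 1 + b).factorial : ℝ) ≠ 0 := Nat.cast_ne_zero.mpr (b+1+b).factorial_ne_zero
  simp only [Nat.factorial_succ, Nat.factorial_one]
  push_cast
  field_simp
  ring

private lemma fcoef_rec (j k : ℕ) (hk : 1 ≤ k) (hkj : k ≤ j - 1) :
    fcoef j k = fcoef (j - 1) k + fcoef j (k - 1) * ((j : ℝ) - k + 1) := by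
  obtain ⟨b, rfl⟩ : ∃ b, k = b + 1 := ⟨k - 1, by omega⟩
  obtain ⟨a, rfl⟩ : ∃ a, j = b + a + 2 := ⟨j - b - 2, by omega⟩
  simp only [fcoef, Nat.add_sub_cancel]
  have e1 : b + a + 2 + (b + 1) = ((b + a + 1 + (b + 1)) + 1) := by ring
  have e2 : b + a + 2 - (b + 1) = a + 1 := by omega
  have e3 : b + a + 2 - 1 = b + a + 1 := by omega
  have e4 : b + a + 1 - (b + 1) = a := by omega
  have e5 : b + a + 2 + b = b + a + 1 + (b + 1) := by ring
  have e6 : b + a + 2 - b = (a + 1) + 1 := by omega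
  rw [e2, e3, e4, e5, e6, e1]
  have hcast : ((b + a + 2 : ℕ) : ℝ) - ((b + 1 : ℕ) : ℝ) + 1 = (a : ℝ) + 2 := by
    push_cast; ring
  rw [hcast]
  set m := b + a + 1 + (b + 1) with hm
  have hb : (b.factorial : ℝ) ≠ 0 := Nat.cast_ne_zero.mpr b.factorial_ne_zero
  have ha : (a.factorial : ℝ) ≠ 0 := Nat.cast_ne_zero.mpr a.factorial_ne_zero
  have hmm : (m.factorial : ℝ) ≠ 0 := Nat.cast_ne_zero.mpr m.factorial_ne_zero
  have h2 : (2 : ℝ) ^ b ≠ 0 := by positivity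
  rw [Nat.factorial_succ m, Nat.factorial_succ (a + 1), Nat.factorial_succ a,
    Nat.factorial_succ b]
  have hmval : ((m : ℕ) : ℝ) = 2 * b + a + 2 := by rw [hm]; push_cast; ring
  push_cast
  rw [hmval]
  field_simp
  ring

private lemma main_aux (c : ℕ → ℕ → ℝ)
    (h0 : ∀ j : ℕ, c 0 j = 1)
    (hdiag : ∀ j : ℕ, 1 ≤ j → c j j = c (j - 1) j)
    (hrec : ∀ j k : ℕ, 1 ≤ k → k ≤ j - 1 →
      c k j = c k (j - 1) + c (k - 1) j * ((j : ℝ) - k + 1)) :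
    ∀ j k : ℕ, k ≤ j → c k j = fcoef j k := by
  intro j
  induction j with
  | zero =>
    intro k hk
    interval_cases k
    rw [h0, fcoef_zero]
  | succ j ih =>
    intro k
    induction k with
    | zero => intro _; rw [h0, fcoef_zero]
    | succ k ihk =>
      intro hk
      rcases Nat.lt_or_ge (k + 1) (j + 1) with h | h
      · have hk1 : k + 1 ≤ j := Nat.lt_succ_iff.mp h
        have hr := hrec (j + 1) (k + 1) (by omega) (by omega)
        simp only [Nat.add_sub_cancel] at hr
        rw [hr, ih (k + 1) hk1, ihk (by omega)]
        exact (fcoef_rec (j + 1) (k + 1) (by omega) (by omega)).symm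
      · obtain rfl : k = j := by omega
        have hd := hdiag (k + 1) (by omega)
        simp only [Nat.add_sub_cancel] at hd
        rw [hd, ihk (by omega)]
        exact (fcoef_diag (k + 1) (by omega)).symm

theorem coefficient_recurrence_closed_form (c : ℕ → ℕ → ℝ)
    (h0 : ∀ j : ℕ, c 0 j = 1)
    (hdiag : ∀ j : ℕ, 1 ≤ j → c j j = c (j - 1) j)
    (hrec : ∀ j k : ℕ, 1 ≤ k → k ≤ j - 1 →
      c k j = c k (j - 1) + c (k - 1) j * ((j : ℝ) - k + 1)) :
    ∀ j k : ℕ, 1 ≤ j → 1 ≤ k → k ≤ j - 1 →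
      c k j = Real.Gamma ((j : ℝ) + k + 1) /
        (2 ^ k * (k.factorial : ℝ) * Real.Gamma ((j : ℝ) - k + 1)) := by
  intro j k hj hk hkj
  have hkle : k ≤ j := by omega
  rw [main_aux c h0 hdiag hrec j k hkle]
  have h1 : (j : ℝ) + k + 1 = ((j + k : ℕ) : ℝ) + 1 := by push_cast; ring
  have h2 : (j : ℝ) - k + 1 = ((j - k : ℕ) : ℝ) + 1 := by
    rw [Nat.cast_sub hkle]
  rw [h1, h2, Real.Gamma_nat_eq_factorial, Real.Gamma_nat_eq_factorial]
  rfl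
end

section
/- The discrete heat kernel G(t,n) := e^{-2t}·I_n(2t) satisfies, for n ∈ ℕ₀ and t ≥ 0, the series representation G(t,n) = (t^n·4^n/√π)·e^{-4t}·Σ_{k=0}^∞ ((4t)^k/k!)·Γ(n+1/2+k)/Γ(2n+1+k). -/
/-- The discrete heat kernel on `ℤ`: `G(t,n) = e^{-2t} I_n(2t)`. -/
noncomputable def heatKernel (t : ℝ) (n : ℤ) : ℝ := Real.exp (-(2 * t)) * besselI n (2 * t)

/-!
Write `G(t,n) = e^{-4t} · e^{2t} I_n(2t)`. The Cauchy product of the exponential series with the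
Bessel series gives `e^{2t} I_n(2t) = t^n Σ_k s_k t^k` with
`s_k = Σ_{2m+j=k} 2^j / (j! m! (m+n)!)`. Both `s_k` and `(4^n/√π) (4^k/k!) Γ(n+1/2+k)/Γ(2n+1+k)`
satisfy `(k+1)(2n+k+1) x_{k+1} = 2(2n+2k+1) x_k` and start at `1/n!`: for the Gamma side this is
`Γ(x+1) = x Γ(x)` and Legendre's duplication formula, for `s_k` creative telescoping in `m`.
-/

open Finset
open scoped Nat

/-- `1 / j!`, extended by zero to negative `j` (as `1 / Γ(j + 1)` is), so that the telescoping
certificate below needs no case distinctions. -/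
noncomputable def invFactorial (j : ℤ) : ℝ := if 0 ≤ j then ((j.toNat)! : ℝ)⁻¹ else 0

lemma invFactorial_natCast (j : ℕ) : invFactorial j = ((j ! : ℕ) : ℝ)⁻¹ := by
  simp [invFactorial]

lemma invFactorial_of_neg {j : ℤ} (hj : j < 0) : invFactorial j = 0 :=
  if_neg (by omega)

lemma invFactorial_sub_one (j : ℤ) : invFactorial (j - 1) = j * invFactorial j := by
  rcases lt_or_ge j 1 with hj | hj
  · rcases eq_or_ne j 0 with rfl | hj0
    · simp [invFactorial_of_neg]
    · rw [invFactorial_of_neg (by omega), invFactorial_of_neg (by omega), mul_zero]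
  · lift j to ℕ using by omega
    obtain ⟨i, rfl⟩ : ∃ i, j = i + 1 := ⟨j - 1, by omega⟩
    rw [show ((i + 1 : ℕ) : ℤ) - 1 = i by push_cast; ring, invFactorial_natCast,
      invFactorial_natCast, Nat.factorial_succ]
    push_cast
    field_simp

/-- The coefficient of `t^(2m)` in `t^{-n} I_n(2t)` times that of `t^(k-2m)` in `e^{2t}`. -/
noncomputable def expBesselCoeff (n : ℕ) (k m : ℤ) : ℝ :=
  2 ^ (k - 2 * m) * invFactorial (k - 2 * m) * invFactorial m * invFactorial (m + n)

lemma expBesselCoeff_of_lt {n : ℕ} {k m : ℤ} (h : k < 2 * m) : expBesselCoeff n k m = 0 := by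
  rw [expBesselCoeff, invFactorial_of_neg (by omega), mul_zero, zero_mul, zero_mul]

lemma expBesselCoeff_of_neg {n : ℕ} {k m : ℤ} (hm : m < 0) : expBesselCoeff n k m = 0 := by
  rw [expBesselCoeff, invFactorial_of_neg hm, mul_zero, zero_mul]

/-- Zeilberger's certificate for `expBesselSeq_succ`. -/
lemma expBesselCoeff_recurrence (n : ℕ) (k m : ℤ) :
    ((k : ℝ) + 1) * (2 * n + k + 1) * expBesselCoeff n (k + 1) m
        - 2 * (2 * n + 2 * k + 1) * expBesselCoeff n k m =
      4 * (expBesselCoeff n (k - 1) (m - 1) - expBesselCoeff n (k - 1) m) := by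
  obtain ⟨b, rfl⟩ : ∃ b, k = b + 2 * m - 1 := ⟨k - 2 * m + 1, by ring⟩
  simp only [expBesselCoeff, show b + 2 * m - 1 + 1 - 2 * m = b by ring,
    show b + 2 * m - 1 - 2 * m = b - 1 by ring, show b + 2 * m - 1 - 1 - 2 * (m - 1) = b by ring,
    show b + 2 * m - 1 - 1 - 2 * m = b - 1 - 1 by ring, show m - 1 + n = m + n - 1 by ring,
    invFactorial_sub_one, zpow_sub_one₀ (two_ne_zero (α := ℝ))]
  push_cast
  ring

lemma expBesselCoeff_two_mul_add (n m j : ℕ) :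
    expBesselCoeff n (2 * m + j : ℕ) m = 2 ^ j / (j ! * m ! * (m + n)!) := by
  rw [expBesselCoeff, show ((2 * m + j : ℕ) : ℤ) - 2 * m = j by push_cast; ring,
    show (m : ℤ) + n = ((m + n : ℕ) : ℤ) by push_cast; ring, zpow_natCast, invFactorial_natCast,
    invFactorial_natCast, invFactorial_natCast]
  field_simp

noncomputable def expBesselSeq (n k : ℕ) : ℝ := ∑ m ∈ range (k + 1), expBesselCoeff n k m

lemma expBesselSeq_eq_sum_range {n k N : ℕ} (hN : k + 1 ≤ N) :
    expBesselSeq n k = ∑ m ∈ range N, expBesselCoeff n k m :=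
  sum_subset (range_subset_range.2 hN) fun m _ hm ↦
    expBesselCoeff_of_lt (by simp only [mem_range, not_lt] at hm; omega)

lemma expBesselSeq_succ (n k : ℕ) :
    ((k : ℝ) + 1) * (2 * n + k + 1) * expBesselSeq n (k + 1) =
      2 * (2 * n + 2 * k + 1) * expBesselSeq n k := by
  rw [← sub_eq_zero, expBesselSeq, expBesselSeq_eq_sum_range (N := k + 2) (by omega), mul_sum,
    mul_sum, ← sum_sub_distrib]
  have hcert (m : ℕ) := expBesselCoeff_recurrence n k m
  push_cast at hcert ⊢
  rw [sum_congr rfl fun m _ ↦ hcert m, ← mul_sum]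
  have htel := sum_range_sub' (fun m : ℕ ↦ expBesselCoeff n (k - 1) ((m : ℤ) - 1)) (k + 2)
  push_cast at htel
  simp only [add_sub_cancel_right] at htel
  rw [htel, expBesselCoeff_of_neg (by omega), expBesselCoeff_of_lt (by omega), sub_zero, mul_zero]

open Real

lemma Gamma_nat_add_half_div_Gamma (n : ℕ) :
    Gamma ((n : ℝ) + 1 / 2) / Gamma (2 * n + 1) = √π / (4 ^ n * n !) := by
  have hdup := Gamma_mul_Gamma_add_half ((n : ℝ) + 1 / 2)
  rw [show (n : ℝ) + 1 / 2 + 1 / 2 = n + 1 by ring, show 2 * ((n : ℝ) + 1 / 2) = 2 * n + 1 by ring,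
    show 1 - (2 * (n : ℝ) + 1) = -((2 * n : ℕ) : ℝ) by push_cast; ring,
    rpow_neg zero_le_two, rpow_natCast, pow_mul, Gamma_nat_eq_factorial] at hdup
  have hGamma : Gamma (2 * n + 1) ≠ 0 := (Gamma_pos_of_pos (by positivity)).ne'
  field_simp at hdup ⊢
  linear_combination hdup

noncomputable def gammaCoeff (n k : ℕ) : ℝ :=
  4 ^ k / k ! * (Gamma ((n : ℝ) + 1 / 2 + k) / Gamma (2 * (n : ℝ) + 1 + k))

lemma gammaCoeff_zero (n : ℕ) : gammaCoeff n 0 = √π / (4 ^ n * n !) := by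
  simpa [gammaCoeff] using Gamma_nat_add_half_div_Gamma n

lemma gammaCoeff_succ (n k : ℕ) :
    ((k : ℝ) + 1) * (2 * n + k + 1) * gammaCoeff n (k + 1) =
      2 * (2 * n + 2 * k + 1) * gammaCoeff n k := by
  rw [gammaCoeff, gammaCoeff]
  push_cast
  rw [← add_assoc, ← add_assoc, Gamma_add_one (by positivity), Gamma_add_one (by positivity),
    Nat.factorial_succ]
  have hGamma : Gamma (2 * (n : ℝ) + 1 + k) ≠ 0 := (Gamma_pos_of_pos (by positivity)).ne'
  push_cast
  field_simp
  ring

lemma expBesselSeq_eq_gammaCoeff (n k : ℕ) :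
    expBesselSeq n k = 4 ^ n / √π * gammaCoeff n k := by
  induction k with
  | zero =>
    have hsqrt : √π ≠ 0 := (sqrt_pos.2 pi_pos).ne'
    have hseq : expBesselSeq n 0 = (n ! : ℝ)⁻¹ := by
      simpa [expBesselSeq] using expBesselCoeff_two_mul_add n 0 0
    rw [hseq, gammaCoeff_zero]
    field_simp
  | succ k ih =>
    have hk : ((k : ℝ) + 1) * (2 * n + k + 1) ≠ 0 := by positivity
    apply mul_left_cancel₀ hk
    rw [expBesselSeq_succ, ih]
    linear_combination -(4 ^ n / √π) * gammaCoeff_succ n k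

lemma besselI_two_mul (n : ℕ) (t : ℝ) :
    besselI n (2 * t) = t ^ n * ∑' m : ℕ, (t ^ 2) ^ m / (m ! * (m + n)!) := by
  rw [besselI, ← tsum_mul_left]
  congr 1 with m
  rw [Int.natAbs_natCast, mul_div_cancel_left₀ t two_ne_zero, pow_add, pow_mul]
  ring

lemma summable_norm_pow_div_factorial_mul_factorial (n : ℕ) (x : ℝ) :
    Summable fun m : ℕ ↦ ‖x ^ m / (m ! * (m + n)!)‖ := by
  refine (Real.summable_pow_div_factorial ‖x‖).of_nonneg_of_le (fun _ ↦ norm_nonneg _) fun m ↦ ?_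
  rw [norm_div, norm_pow, norm_of_nonneg (by positivity : (0 : ℝ) ≤ m ! * (m + n)!)]
  exact div_le_div_of_nonneg_left (by positivity) (by positivity)
    (le_mul_of_one_le_right (by positivity) (Nat.one_le_cast.2 (m + n).factorial_pos))

lemma summable_norm_pow_div_factorial (x : ℝ) :
    Summable fun j : ℕ ↦ ‖x ^ j / (j ! : ℝ)‖ := by
  simpa [norm_div, norm_pow] using Real.summable_pow_div_factorial ‖x‖

lemma hasSum_expBesselSeq_mul_pow (n : ℕ) (t : ℝ) :
    HasSum (fun k : ℕ ↦ expBesselSeq n k * t ^ k)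
      (exp (2 * t) * ∑' m : ℕ, (t ^ 2) ^ m / (m ! * (m + n)!)) := by
  set bessel : ℕ → ℝ := fun m ↦ (t ^ 2) ^ m / (m ! * (m + n)!)
  set expo : ℕ → ℝ := fun j ↦ (2 * t) ^ j / (j ! : ℝ)
  have hbessel : Summable fun m ↦ ‖bessel m‖ := summable_norm_pow_div_factorial_mul_factorial n _
  have hexp : HasSum expo (exp (2 * t)) := by
    rw [exp_eq_exp_ℝ]; exact NormedSpace.expSeries_div_hasSum_exp (2 * t)
  have hprod : HasSum (fun p : ℕ × ℕ ↦ bessel p.1 * expo p.2) ((∑' m, bessel m) * exp (2 * t)) :=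
    hbessel.of_norm.hasSum.mul hexp
      (summable_mul_of_summable_norm hbessel (summable_norm_pow_div_factorial _))
  set shear : ℕ × ℕ → ℕ × ℕ := fun p ↦ (2 * p.1 + p.2, p.1)
  set F : ℕ × ℕ → ℝ := fun q ↦ expBesselCoeff n q.1 q.2 * t ^ q.1
  have hshear : shear.Injective := fun p q h ↦ by
    simp only [shear, Prod.mk.injEq] at h
    ext <;> omega
  have hcomp : F ∘ shear = fun p ↦ bessel p.1 * expo p.2 := by
    ext ⟨m, j⟩
    simp only [Function.comp_apply, F, shear, bessel, expo, expBesselCoeff_two_mul_add, pow_add,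
      pow_mul, mul_pow]
    ring
  have hsupp : ∀ q ∉ Set.range shear, F q = 0 := by
    rintro ⟨k, m⟩ hq
    refine mul_eq_zero_of_left (expBesselCoeff_of_lt ?_) _
    by_contra! h
    refine hq ⟨(m, k - 2 * m), ?_⟩
    simp only [shear, Prod.mk.injEq, and_true] at h ⊢
    omega
  rw [mul_comm, ← hcomp, hshear.hasSum_iff hsupp] at hprod
  refine hprod.prod_fiberwise fun k ↦ ?_
  rw [expBesselSeq, sum_mul]
  refine hasSum_sum_of_ne_finset_zero fun m hm ↦ mul_eq_zero_of_left (expBesselCoeff_of_lt ?_) _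
  simp only [mem_range, not_lt] at hm
  omega

open Real in
theorem heatKernel_series_representation_general (n : ℕ) (t : ℝ) :
    heatKernel t n = t ^ n * 4 ^ n / Real.sqrt π * Real.exp (-(4 * t)) *
      ∑' k : ℕ, (4 * t) ^ k / (k.factorial : ℝ) *
        (Real.Gamma ((n : ℝ) + 1 / 2 + k) / Real.Gamma (2 * (n : ℝ) + 1 + k)) := by
  have hterm (k : ℕ) : expBesselSeq n k * t ^ k = 4 ^ n / √π *
      ((4 * t) ^ k / k ! * (Gamma ((n : ℝ) + 1 / 2 + k) / Gamma (2 * (n : ℝ) + 1 + k))) := by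
    rw [expBesselSeq_eq_gammaCoeff, gammaCoeff, mul_pow]
    ring
  calc heatKernel t n
      = exp (-(4 * t)) * t ^ n * (exp (2 * t) * ∑' m : ℕ, (t ^ 2) ^ m / (m ! * (m + n)!)) := by
        rw [heatKernel, besselI_two_mul, show -(2 * t) = -(4 * t) + 2 * t by ring, exp_add]
        ring
    _ = exp (-(4 * t)) * t ^ n * ∑' k : ℕ, expBesselSeq n k * t ^ k := by
        rw [(hasSum_expBesselSeq_mul_pow n t).tsum_eq]
    _ = _ := by
        rw [tsum_congr hterm, tsum_mul_left]
        ring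

open Real in
theorem heatKernel_series_representation (n : ℕ) (t : ℝ) (ht : 0 ≤ t) :
    heatKernel t n = t ^ n * 4 ^ n / Real.sqrt π * Real.exp (-(4 * t)) *
      ∑' k : ℕ, (4 * t) ^ k / (k.factorial : ℝ) *
        (Real.Gamma ((n : ℝ) + 1 / 2 + k) / Real.Gamma (2 * (n : ℝ) + 1 + k)) :=
  heatKernel_series_representation_general n t
end

section
/- Let f : ℤ → ℝ satisfy |f(n)| ≤ M·(1+|n|^α) for some α > 0, let m be the smallest natural number with 2m ≥ α, and let G(t,j) = e^{-2t}I_j(2t). Then for every t > 0 and n ∈ ℤ, the discrete heat semigroup e^{tΔ_d}f(n) := Σ_{j∈ℤ} G(t,j)·f(n-j) is absolutely convergent and there is C > 0 (depending on M, α) with |e^{tΔ_d}f(n)| ≤ C·(1 + |n|^α + t^{α/2}). -/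
/-! ### Auxiliary machinery -/

/-- The generic term of the Bessel series with argument `2t`. -/
noncomputable def hkTerm (t : ℝ) (j : ℤ) (a : ℕ) : ℝ :=
  t ^ (2 * a + j.natAbs) / (a.factorial * (a + j.natAbs).factorial)

/-- The folding map `(j, a) ↦ (a, a + |j|)` (resp. swapped for negative `j`). -/
def hkφ : ℤ × ℕ → ℕ × ℕ := fun p => if 0 ≤ p.1 then (p.2, p.2 + p.1.natAbs) else (p.2 + p.1.natAbs, p.2)

lemma hkφ_inj : Function.Injective hkφ := by
  rintro ⟨j, a⟩ ⟨j', a'⟩ h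
  unfold hkφ at h
  split_ifs at h with h1 h2 h2 <;>
    (simp only [Prod.mk.injEq] at h ⊢; omega)

lemma hkTerm_nonneg {t : ℝ} (ht : 0 ≤ t) (j : ℤ) (a : ℕ) : 0 ≤ hkTerm t j a := by
  unfold hkTerm; positivity

lemma besselI_expand (t : ℝ) (j : ℤ) : besselI j (2 * t) = ∑' a : ℕ, hkTerm t j a := by
  unfold besselI hkTerm
  norm_num

lemma besselI_nonneg {t : ℝ} (ht : 0 ≤ t) (j : ℤ) : 0 ≤ besselI j (2 * t) := by
  rw [besselI_expand]
  exact tsum_nonneg fun a => hkTerm_nonneg ht j a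

lemma heatKernel_nonneg {t : ℝ} (ht : 0 ≤ t) (j : ℤ) : 0 ≤ heatKernel t j :=
  mul_nonneg (Real.exp_nonneg _) (besselI_nonneg ht j)

/-- transfer lemma: compare a sum over `ℤ × ℕ` with a sum over `ℕ × ℕ` via `hkφ`. -/
lemma hk_transfer {F : ℤ × ℕ → ℝ} {H : ℕ × ℕ → ℝ} (hH : Summable H) (hH0 : ∀ p, 0 ≤ H p)
    (hF0 : ∀ p, 0 ≤ F p) (hle : ∀ p, F p ≤ H (hkφ p)) :
    Summable F ∧ ∑' p, F p ≤ ∑' p, H p := by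
  have hs : Summable F := Summable.of_nonneg_of_le hF0 hle (hH.comp_injective hkφ_inj)
  exact ⟨hs, Summable.tsum_le_tsum_of_inj hkφ hkφ_inj (fun c _ => hH0 c) hle hs hH⟩

lemma exp_hasSum (x : ℝ) : HasSum (fun n : ℕ => x ^ n / n.factorial) (Real.exp x) := by
  have h : Real.exp x = ∑' n : ℕ, x ^ n / n.factorial := by
    rw [Real.exp_eq_exp_ℝ, NormedSpace.exp_eq_tsum_div]
  exact h ▸ (Real.summable_pow_div_factorial x).hasSum

lemma prod_exp_hasSum (x y : ℝ) (hx : 0 ≤ x) (hy : 0 ≤ y) :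
    HasSum (fun p : ℕ × ℕ => x ^ p.1 / p.1.factorial * (y ^ p.2 / p.2.factorial))
      (Real.exp x * Real.exp y) := by
  have hs : Summable (fun p : ℕ × ℕ => x ^ p.1 / p.1.factorial * (y ^ p.2 / p.2.factorial)) :=
    (Real.summable_pow_div_factorial x).mul_of_nonneg (Real.summable_pow_div_factorial y)
      (fun n => by positivity) (fun n => by positivity)
  have := Summable.tsum_mul_tsum (Real.summable_pow_div_factorial x)
    (Real.summable_pow_div_factorial y) hs
  rw [(exp_hasSum x).tsum_eq, (exp_hasSum y).tsum_eq] at this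
  exact this ▸ hs.hasSum

lemma hk_ident (t lam : ℝ) (a k : ℕ) :
    (t * Real.exp (-lam)) ^ a / a.factorial * ((t * Real.exp lam) ^ (a + k) / (a + k).factorial)
      = Real.exp (lam * k) * (t ^ (2 * a + k) / (a.factorial * (a + k).factorial)) := by
  have e1 : Real.exp (-lam) ^ a = Real.exp (↑a * -lam) := (Real.exp_nat_mul _ a).symm
  have e2 : Real.exp lam ^ (a + k) = Real.exp (↑(a + k) * lam) := (Real.exp_nat_mul _ (a + k)).symm
  have e3 : Real.exp (↑a * -lam) * Real.exp (↑(a + k) * lam) = Real.exp (lam * k) := by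
    rw [← Real.exp_add]; congr 1; push_cast; ring
  have e4 : t ^ a * t ^ (a + k) = t ^ (2 * a + k) := by
    rw [← pow_add]; congr 1; omega
  rw [mul_pow, mul_pow, e1, e2]
  calc t ^ a * Real.exp (↑a * -lam) / a.factorial *
        (t ^ (a + k) * Real.exp (↑(a + k) * lam) / (a + k).factorial)
      = Real.exp (↑a * -lam) * Real.exp (↑(a + k) * lam) *
        (t ^ a * t ^ (a + k) / (a.factorial * (a + k).factorial)) := by ring
    _ = Real.exp (lam * k) * (t ^ (2 * a + k) / (a.factorial * (a + k).factorial)) := by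
        rw [e3, e4]

/-- Mass bound: the full double sum of Bessel terms is at most `e^t · e^t`. -/
lemma hk_mass {t : ℝ} (ht : 0 ≤ t) :
    Summable (fun p : ℤ × ℕ => hkTerm t p.1 p.2) ∧
      ∑' p : ℤ × ℕ, hkTerm t p.1 p.2 ≤ Real.exp t * Real.exp t := by
  have hH := (prod_exp_hasSum t t ht ht).summable
  have key := hk_transfer (F := fun p : ℤ × ℕ => hkTerm t p.1 p.2) hH
    (fun p => by positivity) (fun p => hkTerm_nonneg ht p.1 p.2) ?_
  · exact ⟨key.1, key.2.trans_eq (prod_exp_hasSum t t ht ht).tsum_eq⟩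
  · rintro ⟨j, a⟩
    have h0 := hk_ident t 0 a j.natAbs
    simp only [neg_zero, Real.exp_zero, mul_one, zero_mul, one_mul] at h0
    unfold hkTerm hkφ
    split_ifs with h1
    · exact h0.ge
    · have h5 : t ^ (a + j.natAbs) / ((a + j.natAbs).factorial : ℝ) * (t ^ a / a.factorial)
          = t ^ (2 * a + j.natAbs) / (a.factorial * (a + j.natAbs).factorial) := by
        rw [← h0]; ring
      exact h5.ge

/-- Exponential-moment bound for the double sum. -/
lemma hk_mgf {t lam : ℝ} (ht : 0 ≤ t) (hlam : 0 ≤ lam) :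
    Summable (fun p : ℤ × ℕ => Real.exp (lam * p.1.natAbs) * hkTerm t p.1 p.2) ∧
      ∑' p : ℤ × ℕ, Real.exp (lam * p.1.natAbs) * hkTerm t p.1 p.2
        ≤ 2 * (Real.exp (t * Real.exp lam) * Real.exp (t * Real.exp (-lam))) := by
  set A : ℕ × ℕ → ℝ := fun p =>
    (t * Real.exp (-lam)) ^ p.1 / p.1.factorial * ((t * Real.exp lam) ^ p.2 / p.2.factorial) with hA
  set B : ℕ × ℕ → ℝ := fun p =>
    (t * Real.exp lam) ^ p.1 / p.1.factorial * ((t * Real.exp (-lam)) ^ p.2 / p.2.factorial) with hB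
  have hAs : HasSum A (Real.exp (t * Real.exp (-lam)) * Real.exp (t * Real.exp lam)) :=
    prod_exp_hasSum _ _ (by positivity) (by positivity)
  have hBs : HasSum B (Real.exp (t * Real.exp lam) * Real.exp (t * Real.exp (-lam))) :=
    prod_exp_hasSum _ _ (by positivity) (by positivity)
  have hHs : HasSum (fun p => A p + B p)
      (Real.exp (t * Real.exp (-lam)) * Real.exp (t * Real.exp lam) +
        Real.exp (t * Real.exp lam) * Real.exp (t * Real.exp (-lam))) := hAs.add hBs
  have key := hk_transfer (F := fun p : ℤ × ℕ => Real.exp (lam * p.1.natAbs) * hkTerm t p.1 p.2)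
    (H := fun p => A p + B p) hHs.summable
    (fun p => by simp only [hA, hB]; positivity)
    (fun p => mul_nonneg (Real.exp_nonneg _) (hkTerm_nonneg ht p.1 p.2)) ?_
  · refine ⟨key.1, key.2.trans ?_⟩
    rw [hHs.tsum_eq]
    nlinarith [Real.exp_nonneg (t * Real.exp lam), Real.exp_nonneg (t * Real.exp (-lam)),
      mul_nonneg (Real.exp_nonneg (t * Real.exp lam)) (Real.exp_nonneg (t * Real.exp (-lam)))]
  · rintro ⟨j, a⟩
    have h0 := hk_ident t lam a j.natAbs
    unfold hkTerm hkφ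
    split_ifs with h1
    · have hBnn : 0 ≤ (t * Real.exp lam) ^ a / (a.factorial : ℝ) *
          ((t * Real.exp (-lam)) ^ (a + j.natAbs) / (a + j.natAbs).factorial) := by positivity
      exact h0.symm.le.trans (le_add_of_nonneg_right hBnn)
    · have hAnn : 0 ≤ (t * Real.exp (-lam)) ^ (a + j.natAbs) / ((a + j.natAbs).factorial : ℝ) *
          ((t * Real.exp lam) ^ a / a.factorial) := by positivity
      have h5 : (t * Real.exp lam) ^ (a + j.natAbs) / ((a + j.natAbs).factorial : ℝ) *
          ((t * Real.exp (-lam)) ^ a / a.factorial)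
          = Real.exp (lam * j.natAbs) *
            (t ^ (2 * a + j.natAbs) / (a.factorial * (a + j.natAbs).factorial)) := by
        rw [← h0]; ring
      exact h5.symm.le.trans (le_add_of_nonneg_left hAnn)


lemma besselI_hasSum_mass {t : ℝ} (ht : 0 ≤ t) :
    HasSum (fun j : ℤ => besselI j (2 * t)) (∑' p : ℤ × ℕ, hkTerm t p.1 p.2) := by
  apply HasSum.prod_fiberwise (hk_mass ht).1.hasSum
  intro j
  rw [besselI_expand]
  exact ((hk_mass ht).1.prod_factor j).hasSum

lemma heatKernel_sum_le {t : ℝ} (ht : 0 < t) :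
    Summable (fun j : ℤ => heatKernel t j) ∧ ∑' j : ℤ, heatKernel t j ≤ 1 := by
  have h2 : HasSum (fun j : ℤ => heatKernel t j)
      (Real.exp (-(2 * t)) * ∑' p : ℤ × ℕ, hkTerm t p.1 p.2) :=
    (besselI_hasSum_mass ht.le).mul_left _
  refine ⟨h2.summable, ?_⟩
  rw [h2.tsum_eq]
  have h3 := (hk_mass ht.le).2
  have h4 : Real.exp (-(2 * t)) * (Real.exp t * Real.exp t) = 1 := by
    rw [← Real.exp_add, ← Real.exp_add, show -(2 * t) + (t + t) = 0 by ring, Real.exp_zero]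
  nlinarith [Real.exp_nonneg (-(2 * t))]

lemma heatKernel_mgf {t lam : ℝ} (ht : 0 < t) (hlam : 0 ≤ lam) :
    Summable (fun j : ℤ => Real.exp (lam * |(j : ℝ)|) * heatKernel t j) ∧
      ∑' j : ℤ, Real.exp (lam * |(j : ℝ)|) * heatKernel t j
        ≤ 2 * Real.exp (t * Real.exp lam + t * Real.exp (-lam) - 2 * t) := by
  have hb : HasSum (fun j : ℤ => Real.exp (lam * j.natAbs) * besselI j (2 * t))
      (∑' p : ℤ × ℕ, Real.exp (lam * p.1.natAbs) * hkTerm t p.1 p.2) := by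
    apply HasSum.prod_fiberwise (hk_mgf ht.le hlam).1.hasSum
    intro j
    rw [besselI_expand]
    exact (((hk_mass ht.le).1.prod_factor j).hasSum).mul_left _
  have h2 := hb.mul_left (Real.exp (-(2 * t)))
  have h3 : (fun j : ℤ => Real.exp (-(2 * t)) * (Real.exp (lam * j.natAbs) * besselI j (2 * t)))
      = fun j : ℤ => Real.exp (lam * |(j : ℝ)|) * heatKernel t j := by
    funext j
    rw [heatKernel]
    push_cast [Nat.cast_natAbs]
    ring
  rw [h3] at h2
  refine ⟨h2.summable, ?_⟩
  rw [h2.tsum_eq]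
  have h4 := (hk_mgf ht.le hlam).2
  have h5 : Real.exp (-(2 * t)) * (2 * (Real.exp (t * Real.exp lam) * Real.exp (t * Real.exp (-lam))))
      = 2 * Real.exp (t * Real.exp lam + t * Real.exp (-lam) - 2 * t) := by
    rw [show t * Real.exp lam + t * Real.exp (-lam) - 2 * t
        = -(2 * t) + (t * Real.exp lam + t * Real.exp (-lam)) by ring,
      Real.exp_add, Real.exp_add]
    ring
  nlinarith [Real.exp_nonneg (-(2 * t))]

lemma exp_add_exp_neg_le {lam : ℝ} (h0 : 0 ≤ lam) (h1 : lam ≤ 1) :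
    Real.exp lam + Real.exp (-lam) ≤ 2 + 2 * lam ^ 2 := by
  have ha : |lam| ≤ 1 := by rw [abs_of_nonneg h0]; exact h1
  have hb : |(-lam)| ≤ 1 := by rwa [abs_neg]
  have e1 := Real.exp_bound ha (by norm_num : (0:ℕ) < 2)
  have e2 := Real.exp_bound hb (by norm_num : (0:ℕ) < 2)
  rw [abs_le] at e1 e2
  simp only [Finset.sum_range_succ, Finset.sum_range_zero, abs_of_nonneg h0, abs_neg] at e1 e2
  norm_num at e1 e2
  nlinarith [e1.2, e2.2]

lemma rpow_le_aux {u α : ℝ} {m : ℕ} (hu : 0 ≤ u) (hα : 0 < α) (hm : α ≤ 2 * m) :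
    u ^ α ≤ 1 + (2 * m).factorial * Real.exp u := by
  have hfac : (0:ℝ) < (2 * m).factorial := by exact_mod_cast (2 * m).factorial_pos
  rcases le_or_gt u 1 with h | h
  · have h1 : u ^ α ≤ 1 := Real.rpow_le_one hu h hα.le
    nlinarith [Real.exp_nonneg u, mul_nonneg hfac.le (Real.exp_nonneg u)]
  · have h1 : u ^ α ≤ u ^ (((2 * m : ℕ) : ℝ)) :=
      Real.rpow_le_rpow_of_exponent_le h.le (by push_cast; linarith)
    rw [Real.rpow_natCast] at h1
    have h2 : u ^ (2 * m) / (2 * m).factorial ≤ Real.exp u :=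
      Real.pow_div_factorial_le_exp u hu (2 * m)
    rw [div_le_iff₀ hfac] at h2
    nlinarith

lemma add_rpow_le {x y α : ℝ} (hx : 0 ≤ x) (hy : 0 ≤ y) (hα : 0 < α) :
    (x + y) ^ α ≤ 2 ^ α * (x ^ α + y ^ α) := by
  have h2 : (0:ℝ) ≤ 2 := by norm_num
  rcases le_total x y with h | h
  · calc (x + y) ^ α ≤ (2 * y) ^ α := Real.rpow_le_rpow (by linarith) (by linarith) hα.le
      _ = 2 ^ α * y ^ α := Real.mul_rpow h2 hy
      _ ≤ 2 ^ α * (x ^ α + y ^ α) := by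
          nlinarith [Real.rpow_nonneg hx α, Real.rpow_nonneg h2 α]
  · calc (x + y) ^ α ≤ (2 * x) ^ α := Real.rpow_le_rpow (by linarith) (by linarith) hα.le
      _ = 2 ^ α * x ^ α := Real.mul_rpow h2 hx
      _ ≤ 2 ^ α * (x ^ α + y ^ α) := by
          nlinarith [Real.rpow_nonneg hy α, Real.rpow_nonneg h2 α]

lemma heatKernel_moment {t α : ℝ} {m : ℕ} (ht : 0 < t) (hα : 0 < α) (hm : α ≤ 2 * m) :
    Summable (fun j : ℤ => |(j : ℝ)| ^ α * heatKernel t j) ∧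
      ∑' j : ℤ, |(j : ℝ)| ^ α * heatKernel t j
        ≤ (1 + ((2 * m).factorial : ℝ) * (2 * Real.exp 2)) * (1 + t ^ (α / 2)) := by
  obtain ⟨s, hs1, hsle, hsq⟩ : ∃ s : ℝ, 1 ≤ s ∧ s ^ α ≤ 1 + t ^ (α / 2) ∧ t * (1 / s) ^ 2 ≤ 1 := by
    rcases le_or_gt t 1 with h | h
    · exact ⟨1, le_refl 1,
        by rw [Real.one_rpow]; linarith [Real.rpow_nonneg ht.le (α / 2)],
        by simpa using h⟩
    · refine ⟨Real.sqrt t, ?_, ?_, ?_⟩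
      · rw [show (1:ℝ) = Real.sqrt 1 by rw [Real.sqrt_one]]
        exact Real.sqrt_le_sqrt h.le
      · have hsq : Real.sqrt t ^ α = t ^ (α / 2) := by
          rw [Real.sqrt_eq_rpow, ← Real.rpow_mul ht.le]
          congr 1
          ring
        rw [hsq]
        linarith
      · rw [div_pow, one_pow, Real.sq_sqrt ht.le]
        rw [mul_one_div, div_self (ne_of_gt ht)]
  have hs0 : 0 < s := lt_of_lt_of_le one_pos hs1
  have hlam0 : 0 ≤ 1 / s := by positivity
  have hlam1 : 1 / s ≤ 1 := by rw [div_le_one hs0]; exact hs1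
  have hG : ∀ j : ℤ, 0 ≤ heatKernel t j := heatKernel_nonneg ht.le
  have hmgf := heatKernel_mgf ht hlam0
  have hmass := heatKernel_sum_le ht
  have hsα : 0 ≤ s ^ α := Real.rpow_nonneg hs0.le α
  have hfac : (0:ℝ) ≤ ((2 * m).factorial : ℝ) := Nat.cast_nonneg _
  have hpt : ∀ j : ℤ, |(j : ℝ)| ^ α * heatKernel t j ≤
      s ^ α * heatKernel t j +
        (s ^ α * ((2 * m).factorial : ℝ)) * (Real.exp ((1 / s) * |(j : ℝ)|) * heatKernel t j) := by
    intro j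
    have hu0 : 0 ≤ (1 / s) * |(j : ℝ)| := by positivity
    have h1 : |(j : ℝ)| ^ α = s ^ α * ((1 / s) * |(j : ℝ)|) ^ α := by
      rw [← Real.mul_rpow hs0.le hu0]
      congr 1
      field_simp
    have h2 : ((1 / s) * |(j : ℝ)|) ^ α
        ≤ 1 + ((2 * m).factorial : ℝ) * Real.exp ((1 / s) * |(j : ℝ)|) := rpow_le_aux hu0 hα hm
    rw [h1]
    calc s ^ α * ((1 / s) * |(j : ℝ)|) ^ α * heatKernel t j
        ≤ s ^ α * (1 + ((2 * m).factorial : ℝ) * Real.exp ((1 / s) * |(j : ℝ)|)) * heatKernel t j :=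
          mul_le_mul_of_nonneg_right (mul_le_mul_of_nonneg_left h2 hsα) (hG j)
      _ = s ^ α * heatKernel t j +
          (s ^ α * ((2 * m).factorial : ℝ)) * (Real.exp ((1 / s) * |(j : ℝ)|) * heatKernel t j) := by
          ring
  have hmajs : Summable (fun j : ℤ => s ^ α * heatKernel t j +
      (s ^ α * ((2 * m).factorial : ℝ)) * (Real.exp ((1 / s) * |(j : ℝ)|) * heatKernel t j)) :=
    (hmass.1.mul_left _).add (hmgf.1.mul_left _)
  have hsum : Summable (fun j : ℤ => |(j : ℝ)| ^ α * heatKernel t j) :=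
    Summable.of_nonneg_of_le
      (fun j => mul_nonneg (Real.rpow_nonneg (abs_nonneg _) _) (hG j)) hpt hmajs
  refine ⟨hsum, ?_⟩
  have hTS := Summable.tsum_le_tsum hpt hsum hmajs
  rw [Summable.tsum_add (hmass.1.mul_left _) (hmgf.1.mul_left _), tsum_mul_left, tsum_mul_left] at hTS
  have harg : t * Real.exp (1 / s) + t * Real.exp (-(1 / s)) - 2 * t ≤ 2 := by
    have hc := exp_add_exp_neg_le hlam0 hlam1
    nlinarith [ht.le]
  have hmgfB : ∑' j : ℤ, Real.exp ((1 / s) * |(j : ℝ)|) * heatKernel t j ≤ 2 * Real.exp 2 := by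
    refine hmgf.2.trans ?_
    have := Real.exp_le_exp.mpr harg
    linarith
  have hmgfpos : 0 ≤ ∑' j : ℤ, Real.exp ((1 / s) * |(j : ℝ)|) * heatKernel t j :=
    tsum_nonneg fun j => mul_nonneg (Real.exp_nonneg _) (hG j)
  have hmasspos : 0 ≤ ∑' j : ℤ, heatKernel t j := tsum_nonneg hG
  have c1 : s ^ α * (∑' j : ℤ, heatKernel t j) ≤ s ^ α := by
    nlinarith [hmass.2]
  have c2 : (s ^ α * ((2 * m).factorial : ℝ)) *
      (∑' j : ℤ, Real.exp ((1 / s) * |(j : ℝ)|) * heatKernel t j)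
      ≤ (s ^ α * ((2 * m).factorial : ℝ)) * (2 * Real.exp 2) :=
    mul_le_mul_of_nonneg_left hmgfB (by positivity)
  have hfin : s ^ α * (1 + ((2 * m).factorial : ℝ) * (2 * Real.exp 2))
      ≤ (1 + ((2 * m).factorial : ℝ) * (2 * Real.exp 2)) * (1 + t ^ (α / 2)) := by
    nlinarith [Real.exp_nonneg (2:ℝ), mul_nonneg hfac (by positivity : (0:ℝ) ≤ 2 * Real.exp 2)]
  nlinarith [hTS]

theorem heat_semigroup_polynomial_growth_bound (f : ℤ → ℝ) (α M : ℝ) (hα : 0 < α)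
    (hf : ∀ n : ℤ, |f n| ≤ M * (1 + |(n : ℝ)| ^ α))
    (m : ℕ) (hm : α ≤ 2 * m) (hmin : ∀ m' : ℕ, α ≤ 2 * m' → m ≤ m') :
    (∀ t : ℝ, 0 < t → ∀ n : ℤ, Summable (fun j : ℤ => |heatKernel t j * f (n - j)|)) ∧
    ∃ C > 0, ∀ t : ℝ, 0 < t → ∀ n : ℤ,
      |∑' j : ℤ, heatKernel t j * f (n - j)| ≤ C * (1 + |(n : ℝ)| ^ α + t ^ (α / 2)) := by
  have hM : 0 ≤ M := by
    have h0 := hf 0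
    simp [Real.zero_rpow hα.ne'] at h0
    linarith [abs_nonneg (f 0)]
  set K : ℝ := 1 + ((2 * m).factorial : ℝ) * (2 * Real.exp 2) with hK
  have hK1 : 1 ≤ K := by
    rw [hK]
    nlinarith [mul_nonneg (show (0:ℝ) ≤ ((2 * m).factorial : ℝ) from Nat.cast_nonneg _)
      (by positivity : (0:ℝ) ≤ 2 * Real.exp 2)]
  have h2α : (0:ℝ) ≤ 2 ^ α := Real.rpow_nonneg (by norm_num) α
  have hpt : ∀ t : ℝ, 0 < t → ∀ n j : ℤ,
      |heatKernel t j * f (n - j)| ≤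
        (M * (1 + 2 ^ α * |(n : ℝ)| ^ α)) * heatKernel t j +
          (M * 2 ^ α) * (|(j : ℝ)| ^ α * heatKernel t j) := by
    intro t ht n j
    have hG := heatKernel_nonneg ht.le j
    have hnn : (0:ℝ) ≤ |(n : ℝ)| ^ α := Real.rpow_nonneg (abs_nonneg _) α
    have hjj : (0:ℝ) ≤ |(j : ℝ)| ^ α := Real.rpow_nonneg (abs_nonneg _) α
    rw [abs_mul, abs_of_nonneg hG]
    have h1 : |f (n - j)| ≤ M * (1 + 2 ^ α * (|(n : ℝ)| ^ α + |(j : ℝ)| ^ α)) := by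
      refine (hf (n - j)).trans ?_
      have h2 : |((n - j : ℤ) : ℝ)| ≤ |(n : ℝ)| + |(j : ℝ)| := by
        push_cast
        exact abs_sub _ _
      have h3 : |((n - j : ℤ) : ℝ)| ^ α ≤ 2 ^ α * (|(n : ℝ)| ^ α + |(j : ℝ)| ^ α) :=
        le_trans (Real.rpow_le_rpow (abs_nonneg _) h2 hα.le)
          (add_rpow_le (abs_nonneg _) (abs_nonneg _) hα)
      nlinarith
    calc heatKernel t j * |f (n - j)|
        ≤ heatKernel t j * (M * (1 + 2 ^ α * (|(n : ℝ)| ^ α + |(j : ℝ)| ^ α))) :=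
          mul_le_mul_of_nonneg_left h1 hG
      _ = (M * (1 + 2 ^ α * |(n : ℝ)| ^ α)) * heatKernel t j +
          (M * 2 ^ α) * (|(j : ℝ)| ^ α * heatKernel t j) := by ring
  have hmaj : ∀ t : ℝ, 0 < t → ∀ n : ℤ, Summable (fun j : ℤ =>
      (M * (1 + 2 ^ α * |(n : ℝ)| ^ α)) * heatKernel t j +
        (M * 2 ^ α) * (|(j : ℝ)| ^ α * heatKernel t j)) :=
    fun t ht n => ((heatKernel_sum_le ht).1.mul_left _).add
      ((heatKernel_moment ht hα hm).1.mul_left _)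
  have hsummable : ∀ t : ℝ, 0 < t → ∀ n : ℤ,
      Summable (fun j : ℤ => |heatKernel t j * f (n - j)|) :=
    fun t ht n => Summable.of_nonneg_of_le (fun j => abs_nonneg _) (hpt t ht n) (hmaj t ht n)
  refine ⟨hsummable, (M + 1) * (2 ^ α + 1) * (K + 1), by positivity, ?_⟩
  intro t ht n
  have htα : (0:ℝ) ≤ t ^ (α / 2) := Real.rpow_nonneg ht.le _
  have hnα : (0:ℝ) ≤ |(n : ℝ)| ^ α := Real.rpow_nonneg (abs_nonneg _) _
  have step1 : |∑' j : ℤ, heatKernel t j * f (n - j)|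
      ≤ ∑' j : ℤ, |heatKernel t j * f (n - j)| := by
    have hs' : Summable fun j : ℤ => ‖heatKernel t j * f (n - j)‖ := by
      simpa only [Real.norm_eq_abs] using hsummable t ht n
    simpa only [Real.norm_eq_abs] using norm_tsum_le_tsum_norm hs' 
  have step2 := Summable.tsum_le_tsum (hpt t ht n) (hsummable t ht n) (hmaj t ht n)
  rw [Summable.tsum_add ((heatKernel_sum_le ht).1.mul_left _)
      ((heatKernel_moment ht hα hm).1.mul_left _), tsum_mul_left, tsum_mul_left] at step2
  have hSG := (heatKernel_sum_le ht).2
  have hSGpos : 0 ≤ ∑' j : ℤ, heatKernel t j := tsum_nonneg (heatKernel_nonneg ht.le)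
  have hSM := (heatKernel_moment ht hα hm).2
  have hSMpos : 0 ≤ ∑' j : ℤ, |(j : ℝ)| ^ α * heatKernel t j :=
    tsum_nonneg fun j => mul_nonneg (Real.rpow_nonneg (abs_nonneg _) _)
      (heatKernel_nonneg ht.le j)
  have hKdef : (1 + ((2 * m).factorial : ℝ) * (2 * Real.exp 2)) = K := hK.symm
  rw [hKdef] at hSM
  have hcoeff : (0:ℝ) ≤ M * (1 + 2 ^ α * |(n : ℝ)| ^ α) :=
    mul_nonneg hM (by nlinarith [mul_nonneg h2α hnα])
  have c1 : (M * (1 + 2 ^ α * |(n : ℝ)| ^ α)) * (∑' j : ℤ, heatKernel t j)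
      ≤ M * (1 + 2 ^ α * |(n : ℝ)| ^ α) := by
    nlinarith [mul_le_mul_of_nonneg_left hSG hcoeff]
  have c2 : (M * 2 ^ α) * (∑' j : ℤ, |(j : ℝ)| ^ α * heatKernel t j)
      ≤ (M * 2 ^ α) * (K * (1 + t ^ (α / 2))) :=
    mul_le_mul_of_nonneg_left hSM (mul_nonneg hM h2α)
  have final : M * (1 + 2 ^ α * |(n : ℝ)| ^ α) + (M * 2 ^ α) * (K * (1 + t ^ (α / 2)))
      ≤ (M + 1) * (2 ^ α + 1) * (K + 1) * (1 + |(n : ℝ)| ^ α + t ^ (α / 2)) := by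
    nlinarith [mul_nonneg hM h2α, mul_nonneg (mul_nonneg hM h2α) (by linarith : (0:ℝ) ≤ K),
      mul_nonneg hnα htα, mul_nonneg hM hnα, mul_nonneg h2α hnα, mul_nonneg h2α htα,
      mul_nonneg (mul_nonneg hM h2α) hnα, mul_nonneg (mul_nonneg hM h2α) htα,
      mul_nonneg (mul_nonneg (mul_nonneg hM h2α) (by linarith : (0:ℝ) ≤ K)) htα,
      mul_nonneg (mul_nonneg (mul_nonneg hM h2α) (by linarith : (0:ℝ) ≤ K)) hnα,
      mul_nonneg (mul_nonneg h2α (by linarith : (0:ℝ) ≤ K)) htα,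
      mul_nonneg (mul_nonneg h2α (by linarith : (0:ℝ) ≤ K)) hnα]
  linarith
end

section
/- Let k ∈ ℕ and f : ℤ → ℝ. Then for every t > 0 and n ∈ ℤ with all sums absolutely convergent, (e^{tΔ_d} - I)^k f(n) = Σ_{j ∈ ℤ \ {0}} (f(n-j) - f(n)) · T(t,j), where T(t,j) := Σ_{l=1}^{k} (-1)^{k-l}·binom(k,l)·G(lt,j) and G is the discrete heat kernel. In particular (e^{tΔ_d}-I)^k f(n) = Σ_{j∈ℕ}(f(n+j)+f(n-j)-2f(n))·T(t,j). -/
/-- The discrete heat semigroup: `e^{tΔ_d} f(n) = Σ_{j ∈ ℤ} G(t,j) f(n-j)`.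
For `t = 0` this gives back `f(n)` since `G(0,j) = δ_{j,0}`. -/
noncomputable def heatSemigroup (t : ℝ) (f : ℤ → ℝ) (n : ℤ) : ℝ :=
  ∑' j : ℤ, heatKernel t j * f (n - j)

/-- `T(t,j) = Σ_{l=1}^{k} (-1)^{k-l} C(k,l) G(lt,j)`. -/
noncomputable def Tker (k : ℕ) (t : ℝ) (j : ℤ) : ℝ :=
  ∑ l ∈ Finset.Icc 1 k, (-1 : ℝ) ^ (k - l) * (k.choose l : ℝ) * heatKernel (l * t) j

/-! ### Auxiliary lemmas -/

lemma exp_tsum (x : ℝ) : ∑' m : ℕ, x ^ m / m.factorial = Real.exp x := by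
  rw [Real.exp_eq_exp_ℝ, NormedSpace.exp_eq_tsum_div]

/-- The index bijection `ℤ × ℕ ≃ ℕ × ℕ` used to sum the Bessel series. -/
def ezn : ℤ × ℕ ≃ ℕ × ℕ where
  toFun p := if 0 ≤ p.1 then (p.2, p.2 + p.1.natAbs) else (p.2 + p.1.natAbs, p.2)
  invFun q := ((q.2 : ℤ) - (q.1 : ℤ), min q.1 q.2)
  left_inv := by
    rintro ⟨j, m⟩
    by_cases h : 0 ≤ j <;>
      · simp only [h, if_true, if_false]
        refine Prod.ext ?_ ?_ <;> dsimp only <;> omega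
  right_inv := by
    rintro ⟨a, b⟩
    by_cases h : (0:ℤ) ≤ (b : ℤ) - (a : ℤ) <;>
      · simp only [h, if_true, if_false]
        refine Prod.ext ?_ ?_ <;> dsimp only <;> omega

lemma ezn_apply (p : ℤ × ℕ) : ezn p =
    if 0 ≤ p.1 then (p.2, p.2 + p.1.natAbs) else (p.2 + p.1.natAbs, p.2) := rfl

/-- The two-variable Bessel series term as a product. -/
lemma bessel_term_eq (x : ℝ) (p : ℤ × ℕ) :
    (x / 2) ^ (2 * p.2 + p.1.natAbs) / ((p.2.factorial : ℝ) * (p.2 + p.1.natAbs).factorial) =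
    (x / 2) ^ (ezn p).1 / (ezn p).1.factorial * ((x / 2) ^ (ezn p).2 / (ezn p).2.factorial) := by
  obtain ⟨j, m⟩ := p
  rw [ezn_apply]
  by_cases h : 0 ≤ (j, m).1 <;>
    · simp only [h, if_true, if_false]
      rw [div_mul_div_comm, ← pow_add]
      congr 1
      all_goals first
        | (congr 1; omega)
        | omega
        | (push_cast; ring)

lemma summable_exp_norm (x : ℝ) : Summable fun m : ℕ => ‖x ^ m / (m.factorial : ℝ)‖ := by
  simpa [abs_div, abs_pow] using Real.summable_pow_div_factorial |x|

set_option maxHeartbeats 1000000 in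
lemma summable_bessel2 (x : ℝ) :
    Summable (fun p : ℤ × ℕ =>
      (x / 2) ^ (2 * p.2 + p.1.natAbs) / ((p.2.factorial : ℝ) * (p.2 + p.1.natAbs).factorial)) := by
  have hg : Summable (fun q : ℕ × ℕ =>
      (x / 2) ^ q.1 / (q.1.factorial : ℝ) * ((x / 2) ^ q.2 / q.2.factorial)) :=
    summable_mul_of_summable_norm (summable_exp_norm (x / 2)) (summable_exp_norm (x / 2))
  have h2 := (Equiv.summable_iff ezn).mpr hg
  exact h2.congr fun p => (bessel_term_eq x p).symm

lemma besselI_term_summable (j : ℤ) (x : ℝ) :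
    Summable (fun m : ℕ =>
      (x / 2) ^ (2 * m + j.natAbs) / ((m.factorial : ℝ) * (m + j.natAbs).factorial)) :=
  (summable_bessel2 x).prod_factor j

lemma summable_besselI (x : ℝ) (hx : 0 ≤ x) : Summable (fun j : ℤ => besselI j x) := by
  have h := summable_bessel2 x
  have hnn : ∀ p : ℤ × ℕ, 0 ≤ (x / 2) ^ (2 * p.2 + p.1.natAbs) /
      ((p.2.factorial : ℝ) * (p.2 + p.1.natAbs).factorial) := by
    intro p; positivity
  exact ((summable_prod_of_nonneg hnn).mp h).2

lemma tsum_besselI (x : ℝ) (hx : 0 ≤ x) : ∑' j : ℤ, besselI j x = Real.exp x := by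
  have h := summable_bessel2 x
  have h1 : ∑' p : ℤ × ℕ, (x / 2) ^ (2 * p.2 + p.1.natAbs) /
      ((p.2.factorial : ℝ) * (p.2 + p.1.natAbs).factorial) = Real.exp x := by
    rw [tsum_congr (bessel_term_eq x), Equiv.tsum_eq ezn (fun q : ℕ × ℕ =>
      (x / 2) ^ q.1 / (q.1.factorial : ℝ) * ((x / 2) ^ q.2 / q.2.factorial)),
      ← tsum_mul_tsum_of_summable_norm (summable_exp_norm (x / 2)) (summable_exp_norm (x / 2)),
      exp_tsum, ← Real.exp_add]
    norm_num
  rw [← h1, Summable.tsum_prod' h (fun j => besselI_term_summable j x)]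
  rfl

lemma besselI_nonneg_s19 (j : ℤ) (x : ℝ) (hx : 0 ≤ x) : 0 ≤ besselI j x := by
  apply tsum_nonneg
  intro m; positivity

lemma besselI_neg (j : ℤ) (x : ℝ) : besselI (-j) x = besselI j x := by
  simp [besselI]

lemma besselI_zero_of_ne (j : ℤ) (hj : j ≠ 0) : besselI j 0 = 0 := by
  have h0 : ∀ m : ℕ, ((0:ℝ) / 2) ^ (2 * m + j.natAbs) /
      ((m.factorial : ℝ) * (m + j.natAbs).factorial) = 0 := by
    intro m
    rw [zero_div, zero_pow (by omega), zero_div]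
  simp only [besselI, h0, tsum_zero]

lemma besselI_zero_zero : besselI 0 0 = 1 := by
  unfold besselI
  rw [tsum_eq_single 0]
  · norm_num
  · intro m hm
    rw [zero_div, zero_pow (by omega), zero_div]

/-- Bound: `I_j(x) ≤ (x/2)^{|j|}/|j|! · e^{(x/2)²}` for `x ≥ 0`. -/
lemma besselI_le (j : ℤ) (x : ℝ) (hx : 0 ≤ x) :
    besselI j x ≤ (x / 2) ^ j.natAbs / j.natAbs.factorial * Real.exp ((x / 2) ^ 2) := by
  have hsum2 : Summable fun m : ℕ =>
      (x / 2) ^ j.natAbs / j.natAbs.factorial * (((x / 2) ^ 2) ^ m / m.factorial) :=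
    (Real.summable_pow_div_factorial ((x / 2) ^ 2)).mul_left _
  have hle : ∀ m : ℕ, (x / 2) ^ (2 * m + j.natAbs) /
      ((m.factorial : ℝ) * (m + j.natAbs).factorial) ≤
      (x / 2) ^ j.natAbs / j.natAbs.factorial * (((x / 2) ^ 2) ^ m / m.factorial) := by
    intro m
    have hnum : (x / 2) ^ j.natAbs * ((x / 2) ^ 2) ^ m = (x / 2) ^ (2 * m + j.natAbs) := by
      rw [← pow_mul, ← pow_add, add_comm]
    rw [div_mul_div_comm, hnum]
    apply div_le_div_of_nonneg_left (by positivity) (by positivity)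
    have hden : (j.natAbs.factorial * m.factorial : ℕ) ≤
        m.factorial * (m + j.natAbs).factorial := by
      rw [Nat.mul_comm]
      exact Nat.mul_le_mul_left _ (Nat.factorial_le (Nat.le_add_left _ _))
    exact_mod_cast hden
  calc besselI j x ≤ ∑' m : ℕ, (x / 2) ^ j.natAbs / j.natAbs.factorial *
        (((x / 2) ^ 2) ^ m / m.factorial) :=
      Summable.tsum_le_tsum hle (besselI_term_summable j x) hsum2
    _ = (x / 2) ^ j.natAbs / j.natAbs.factorial * Real.exp ((x / 2) ^ 2) := by
      rw [Summable.tsum_mul_left _ (Real.summable_pow_div_factorial _), exp_tsum]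

/-! ### Heat kernel lemmas -/

lemma heatKernel_nonneg_s19 (s : ℝ) (hs : 0 ≤ s) (j : ℤ) : 0 ≤ heatKernel s j :=
  mul_nonneg (Real.exp_nonneg _) (besselI_nonneg_s19 j _ (by linarith))

lemma heatKernel_neg (s : ℝ) (j : ℤ) : heatKernel s (-j) = heatKernel s j := by
  rw [heatKernel, heatKernel, besselI_neg]

lemma heatKernel_zero_of_ne (j : ℤ) (hj : j ≠ 0) : heatKernel 0 j = 0 := by
  rw [heatKernel]
  norm_num [besselI_zero_of_ne j hj]

lemma heatKernel_summable (s : ℝ) (hs : 0 ≤ s) : Summable (fun j : ℤ => heatKernel s j) :=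
  (summable_besselI (2 * s) (by linarith)).mul_left _

lemma heatKernel_tsum (s : ℝ) (hs : 0 ≤ s) : ∑' j : ℤ, heatKernel s j = 1 := by
  unfold heatKernel
  rw [Summable.tsum_mul_left _ (summable_besselI (2 * s) (by linarith)),
    tsum_besselI (2 * s) (by linarith), ← Real.exp_add]
  norm_num

lemma heatKernel_le (s : ℝ) (hs : 0 ≤ s) (j : ℤ) :
    heatKernel s j ≤ Real.exp (-(2 * s)) * Real.exp (s ^ 2) *
      (s ^ j.natAbs / j.natAbs.factorial) := by
  have h := besselI_le j (2 * s) (by linarith)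
  have h2 : (2 * s) / 2 = s := by ring
  rw [h2] at h
  calc heatKernel s j ≤ Real.exp (-(2 * s)) * (s ^ j.natAbs / j.natAbs.factorial *
        Real.exp (s ^ 2)) := mul_le_mul_of_nonneg_left h (Real.exp_nonneg _)
    _ = Real.exp (-(2 * s)) * Real.exp (s ^ 2) * (s ^ j.natAbs / j.natAbs.factorial) := by ring

/-! ### Weighted summability -/

lemma summable_nat_pol (r B : ℝ) (hr : 0 ≤ r) (hB : 0 ≤ B) :
    Summable (fun m : ℕ => r ^ m / m.factorial * (1 + (m : ℝ)) ^ B) := by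
  apply Summable.of_nonneg_of_le (fun m => by positivity) ?_
    (Real.summable_pow_div_factorial (r * Real.exp B))
  intro m
  have h1 : (1 + (m : ℝ)) ^ B ≤ Real.exp B ^ m := by
    rw [Real.rpow_def_of_pos (by positivity), ← Real.exp_nat_mul]
    apply Real.exp_le_exp.mpr
    have hlog : Real.log (1 + (m : ℝ)) ≤ m := by
      have := Real.log_le_sub_one_of_pos (x := 1 + (m : ℝ)) (by positivity)
      linarith
    calc Real.log (1 + (m : ℝ)) * B ≤ (m : ℝ) * B :=
      mul_le_mul_of_nonneg_right hlog hB
    _ = (m : ℝ) * B := rfl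
  calc r ^ m / m.factorial * (1 + (m : ℝ)) ^ B
      ≤ r ^ m / m.factorial * Real.exp B ^ m :=
        mul_le_mul_of_nonneg_left h1 (by positivity)
    _ = (r * Real.exp B) ^ m / m.factorial := by
        rw [mul_pow]; ring

lemma summable_heatKernel_mul (s : ℝ) (hs : 0 ≤ s) (g : ℤ → ℝ) (D B : ℝ) (hB : 0 ≤ B)
    (hg : ∀ j : ℤ, |g j| ≤ D * (1 + |(j : ℝ)|) ^ B) :
    Summable (fun j : ℤ => heatKernel s j * g j) := by
  have hD : 0 ≤ D := le_trans (abs_nonneg (g 0)) (by simpa using hg 0)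
  apply Summable.of_norm
  set E := Real.exp (-(2 * s)) * Real.exp (s ^ 2) * D with hE
  have hmaj : Summable (fun j : ℤ =>
      E * (s ^ j.natAbs / j.natAbs.factorial * (1 + (j.natAbs : ℝ)) ^ B)) := by
    apply Summable.mul_left
    apply Summable.of_nat_of_neg <;>
      · apply Summable.congr (summable_nat_pol s B hs hB)
        intro m
        simp
  apply Summable.of_nonneg_of_le (fun j => norm_nonneg _) ?_ hmaj
  intro j
  rw [Real.norm_eq_abs, abs_mul, abs_of_nonneg (heatKernel_nonneg_s19 s hs j)]
  have habs : |(j : ℝ)| = (j.natAbs : ℝ) := by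
    rw [Nat.cast_natAbs, Int.cast_abs]
  calc heatKernel s j * |g j|
      ≤ (Real.exp (-(2 * s)) * Real.exp (s ^ 2) * (s ^ j.natAbs / j.natAbs.factorial)) *
        (D * (1 + |(j : ℝ)|) ^ B) := by
        apply mul_le_mul (heatKernel_le s hs j) (hg j) (abs_nonneg _) (by positivity)
    _ = E * (s ^ j.natAbs / j.natAbs.factorial * (1 + (j.natAbs : ℝ)) ^ B) := by
        rw [← habs, hE]; ring

/-! ### Semigroup splitting and combinatorial identities -/

lemma semigroup_split (s : ℝ) (hs : 0 ≤ s) (f : ℤ → ℝ) (n : ℤ)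
    (h1 : Summable fun j : ℤ => heatKernel s j * (f (n - j) - f n)) :
    heatSemigroup s f n = f n + ∑' j : ℤ, heatKernel s j * (f (n - j) - f n) := by
  unfold heatSemigroup
  have hK := heatKernel_summable s hs
  have h2 : Summable fun j : ℤ => heatKernel s j * f n := hK.mul_right _
  have hptw : ∀ j : ℤ, heatKernel s j * f (n - j) =
      heatKernel s j * (f (n - j) - f n) + heatKernel s j * f n := fun j => by ring
  rw [tsum_congr hptw, Summable.tsum_add h1 h2, tsum_mul_right, heatKernel_tsum s hs, one_mul, add_comm]

lemma alt_sum_zero (k : ℕ) (hk : 1 ≤ k) :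
    ∑ l ∈ Finset.range (k + 1), (-1 : ℝ) ^ (k - l) * (k.choose l : ℝ) = 0 := by
  calc ∑ l ∈ Finset.range (k + 1), (-1 : ℝ) ^ (k - l) * (k.choose l : ℝ)
      = ∑ l ∈ Finset.range (k + 1), (1 : ℝ) ^ l * (-1 : ℝ) ^ (k - l) * (k.choose l : ℝ) := by
        simp
    _ = ((1 : ℝ) + -1) ^ k := (add_pow 1 (-1) k).symm
    _ = 0 := by
        rw [show (1 : ℝ) + -1 = 0 by ring]
        exact zero_pow (by omega)

lemma Tker_neg (k : ℕ) (t : ℝ) (j : ℤ) : Tker k t (-j) = Tker k t j := by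
  unfold Tker
  exact Finset.sum_congr rfl fun l _ => by rw [heatKernel_neg]

theorem heat_minus_identity_iterate_expansion (k : ℕ) (hk : 1 ≤ k) (f : ℤ → ℝ)
    (C A : ℝ) (hf : ∀ n : ℤ, |f n| ≤ C * (1 + |(n : ℝ)|) ^ A)
    (t : ℝ) (ht : 0 < t) (n : ℤ) :
    Summable (fun j : {j : ℤ // j ≠ 0} => (f (n - (j : ℤ)) - f n) * Tker k t j) ∧
    Summable (fun j : ℕ => (f (n + ((j : ℤ) + 1)) + f (n - ((j : ℤ) + 1)) - 2 * f n) *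
      Tker k t ((j : ℤ) + 1)) ∧
    (∑ l ∈ Finset.range (k + 1), (-1 : ℝ) ^ (k - l) * (k.choose l : ℝ) *
        heatSemigroup (l * t) f n =
      ∑' j : {j : ℤ // j ≠ 0}, (f (n - (j : ℤ)) - f n) * Tker k t j) ∧
    (∑ l ∈ Finset.range (k + 1), (-1 : ℝ) ^ (k - l) * (k.choose l : ℝ) *
        heatSemigroup (l * t) f n =
      ∑' j : ℕ, (f (n + ((j : ℤ) + 1)) + f (n - ((j : ℤ) + 1)) - 2 * f n) *
        Tker k t ((j : ℤ) + 1)) := by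
  have hC : 0 ≤ C := le_trans (abs_nonneg (f 0)) (by simpa using hf 0)
  set B : ℝ := max A 0 with hB
  have hB0 : 0 ≤ B := le_max_right _ _
  have hone : ∀ m : ℤ, (1 : ℝ) ≤ 1 + |(m : ℝ)| := fun m => by
    have := abs_nonneg ((m : ℝ)); linarith
  have hfB : ∀ m : ℤ, |f m| ≤ C * (1 + |(m : ℝ)|) ^ B := by
    intro m
    refine (hf m).trans (mul_le_mul_of_nonneg_left ?_ hC)
    exact Real.rpow_le_rpow_of_exponent_le (hone m) (le_max_left _ _)
  set D : ℝ := C * (1 + |(n : ℝ)|) ^ B with hD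
  have hD0 : 0 ≤ D := by positivity
  have hgrow : ∀ j : ℤ, |f (n - j)| ≤ D * (1 + |(j : ℝ)|) ^ B := by
    intro j
    refine (hfB (n - j)).trans ?_
    rw [hD, mul_assoc]
    apply mul_le_mul_of_nonneg_left ?_ hC
    rw [← Real.mul_rpow (by positivity) (by positivity)]
    apply Real.rpow_le_rpow (by positivity) ?_ hB0
    push_cast
    have h1 : |(n : ℝ) - (j : ℝ)| ≤ |(n : ℝ)| + |(j : ℝ)| := abs_sub _ _
    nlinarith [abs_nonneg ((n : ℝ)), abs_nonneg ((j : ℝ)),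
      mul_nonneg (abs_nonneg ((n : ℝ))) (abs_nonneg ((j : ℝ)))]
  have hrpow1 : ∀ j : ℤ, (1 : ℝ) ≤ (1 + |(j : ℝ)|) ^ B := fun j =>
    Real.one_le_rpow (hone j) hB0
  have hdiff : ∀ j : ℤ, |f (n - j) - f n| ≤ (2 * D) * (1 + |(j : ℝ)|) ^ B := by
    intro j
    calc |f (n - j) - f n| ≤ |f (n - j)| + |f n| := abs_sub _ _
      _ ≤ D * (1 + |(j : ℝ)|) ^ B + D := add_le_add (hgrow j) (hfB n)
      _ ≤ D * (1 + |(j : ℝ)|) ^ B + D * (1 + |(j : ℝ)|) ^ B := by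
          nlinarith [hrpow1 j]
      _ = (2 * D) * (1 + |(j : ℝ)|) ^ B := by ring
  have Hsum : ∀ s : ℝ, 0 ≤ s → Summable fun j : ℤ => heatKernel s j * (f (n - j) - f n) :=
    fun s hs => summable_heatKernel_mul s hs _ (2 * D) B hB0 hdiff
  set H : ℤ → ℝ := fun j => (f (n - j) - f n) * Tker k t j with hHdef
  have hH0 : H 0 = 0 := by simp [hHdef]
  have hst : ∀ l : ℕ, (0 : ℝ) ≤ l * t := fun l => by positivity
  have HsumZ : Summable H := by
    have hs2 : Summable fun j : ℤ => ∑ l ∈ Finset.Icc 1 k,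
        (f (n - j) - f n) * ((-1 : ℝ) ^ (k - l) * (k.choose l : ℝ) * heatKernel (l * t) j) := by
      apply summable_sum
      intro l _
      exact ((Hsum (l * t) (hst l)).mul_left ((-1 : ℝ) ^ (k - l) * (k.choose l : ℝ))).congr
        (fun j => by ring)
    exact hs2.congr fun j => by rw [hHdef]; simp [Tker, Finset.mul_sum]
  have key : ∑ l ∈ Finset.range (k + 1), (-1 : ℝ) ^ (k - l) * (k.choose l : ℝ) *
      heatSemigroup (l * t) f n = ∑' j : ℤ, H j := by
    have hsg : ∀ l : ℕ, heatSemigroup (l * t) f n =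
        f n + ∑' j : ℤ, heatKernel (l * t) j * (f (n - j) - f n) :=
      fun l => semigroup_split _ (hst l) f n (Hsum _ (hst l))
    have hsub : Finset.Icc 1 k ⊆ Finset.range (k + 1) := fun x hx =>
      Finset.mem_range.mpr (by have := Finset.mem_Icc.mp hx; omega)
    calc ∑ l ∈ Finset.range (k + 1), (-1 : ℝ) ^ (k - l) * (k.choose l : ℝ) *
          heatSemigroup (l * t) f n
        = ∑ l ∈ Finset.range (k + 1), ((-1 : ℝ) ^ (k - l) * (k.choose l : ℝ) * f n +
            ∑' j : ℤ, (-1 : ℝ) ^ (k - l) * (k.choose l : ℝ) *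
              (heatKernel (l * t) j * (f (n - j) - f n))) := by
          apply Finset.sum_congr rfl
          intro l _
          rw [hsg l, Summable.tsum_mul_left _ (Hsum _ (hst l))]
          ring
      _ = (∑ l ∈ Finset.range (k + 1), (-1 : ℝ) ^ (k - l) * (k.choose l : ℝ)) * f n +
          ∑ l ∈ Finset.range (k + 1), ∑' j : ℤ, (-1 : ℝ) ^ (k - l) * (k.choose l : ℝ) *
            (heatKernel (l * t) j * (f (n - j) - f n)) := by
          rw [Finset.sum_add_distrib, Finset.sum_mul]
      _ = ∑' j : ℤ, ∑ l ∈ Finset.range (k + 1), (-1 : ℝ) ^ (k - l) * (k.choose l : ℝ) *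
            (heatKernel (l * t) j * (f (n - j) - f n)) := by
          rw [alt_sum_zero k hk, zero_mul, zero_add,
            ← Summable.tsum_finsetSum (fun l _ => (Hsum _ (hst l)).mul_left _)]
      _ = ∑' j : ℤ, H j := by
          apply tsum_congr
          intro j
          by_cases hj : j = 0
          · subst hj
            rw [hH0]
            apply Finset.sum_eq_zero
            intro l _
            simp
          · have hzero : ∀ x ∈ Finset.range (k + 1), x ∉ Finset.Icc 1 k →
                (-1 : ℝ) ^ (k - x) * (k.choose x : ℝ) *
                  (heatKernel (x * t) j * (f (n - j) - f n)) = 0 := by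
              intro x hx hx'
              have hx0 : x = 0 := by
                simp only [Finset.mem_Icc, not_and, not_le] at hx'
                have := Finset.mem_range.mp hx
                omega
              subst hx0
              rw [show ((0 : ℕ) : ℝ) * t = 0 by norm_num, heatKernel_zero_of_ne j hj]
              ring
            rw [← Finset.sum_subset hsub hzero, hHdef]
            simp only [Tker, Finset.mul_sum]
            exact Finset.sum_congr rfl fun l _ => by ring
  -- summability over the subtype
  have sum1 : Summable (fun j : {j : ℤ // j ≠ 0} => (f (n - (j : ℤ)) - f n) * Tker k t j) :=
    HsumZ.subtype {j : ℤ | j ≠ 0}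
  -- the two injections
  have hi1 : Summable fun m : ℕ => H ((m : ℤ) + 1) :=
    HsumZ.comp_injective (f := H) (i := fun m : ℕ => (m : ℤ) + 1)
      (fun a b h => by simpa using h)
  have hi2 : Summable fun m : ℕ => H (-((m : ℤ) + 1)) :=
    HsumZ.comp_injective (f := H) (i := fun m : ℕ => -((m : ℤ) + 1))
      (fun a b h => by simpa using h)
  have hcomb : ∀ m : ℕ, H ((m : ℤ) + 1) + H (-((m : ℤ) + 1)) =
      (f (n + ((m : ℤ) + 1)) + f (n - ((m : ℤ) + 1)) - 2 * f n) * Tker k t ((m : ℤ) + 1) := by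
    intro m
    rw [hHdef]
    simp only []
    rw [Tker_neg, sub_neg_eq_add]
    ring
  have sum2 : Summable (fun j : ℕ => (f (n + ((j : ℤ) + 1)) + f (n - ((j : ℤ) + 1)) - 2 * f n) *
      Tker k t ((j : ℤ) + 1)) := (hi1.add hi2).congr hcomb
  have hsupp : Function.support H ⊆ {j : ℤ | j ≠ 0} := by
    intro j hj
    simp only [Set.mem_setOf_eq]
    intro hj0
    rw [hj0] at hj
    exact hj hH0
  have part3 : ∑ l ∈ Finset.range (k + 1), (-1 : ℝ) ^ (k - l) * (k.choose l : ℝ) *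
      heatSemigroup (l * t) f n =
      ∑' j : {j : ℤ // j ≠ 0}, (f (n - (j : ℤ)) - f n) * Tker k t j :=
    key.trans (tsum_subtype_eq_of_support_subset hsupp).symm
  have hnat : Summable fun m : ℕ => H m :=
    HsumZ.comp_injective (f := H) (i := fun m : ℕ => (m : ℤ)) (fun a b h => by simpa using h)
  have h4 : ∑' j : ℤ, H j = ∑' m : ℕ,
      (f (n + ((m : ℤ) + 1)) + f (n - ((m : ℤ) + 1)) - 2 * f n) * Tker k t ((m : ℤ) + 1) := by
    calc ∑' j : ℤ, H j = (∑' m : ℕ, H m) + ∑' m : ℕ, H (-((m : ℤ) + 1)) :=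
          tsum_of_nat_of_neg_add_one hnat hi2
      _ = (H ((0 : ℕ) : ℤ) + ∑' m : ℕ, H (((m + 1 : ℕ) : ℤ))) + ∑' m : ℕ, H (-((m : ℤ) + 1)) := by
          rw [Summable.tsum_eq_zero_add hnat]
      _ = (∑' m : ℕ, H ((m : ℤ) + 1)) + ∑' m : ℕ, H (-((m : ℤ) + 1)) := by
          rw [show ((0 : ℕ) : ℤ) = 0 by norm_num, hH0, zero_add]
          congr 1
      _ = ∑' m : ℕ, (H ((m : ℤ) + 1) + H (-((m : ℤ) + 1))) := (Summable.tsum_add hi1 hi2).symm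
      _ = ∑' m : ℕ, (f (n + ((m : ℤ) + 1)) + f (n - ((m : ℤ) + 1)) - 2 * f n) *
            Tker k t ((m : ℤ) + 1) := tsum_congr hcomb
  exact ⟨sum1, sum2, part3, key.trans h4⟩
end
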